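/- arXiv:2211.06423 — 5 statements merged into one kernel-verified Lean document; each statement's English description precedes it below -/
import Mathlib

section
/- Let h(z) = z + ∑_{n≥2} a_n z^n and g(z) = ∑_{n≥1} b_n z^n be power series convergent on the unit disk U with |b_1| < 1, and suppose ∑_{n≥2} n|a_n| + ∑_{n≥1} n|b_n| ≤ 1. Then the harmonic function f = h + conj(g) is univalent on U: for all z_1, z_2 in U with z_1 ≠ z_2, f(z_1) ≠ f(z_2). -/
/-! If `f z₁ = f z₂`, then `z₁ - z₂` is the negated increment of `h(z) - z` minus the conjugated
increment of `g`. For `r = max |z₁| |z₂| < 1`, the bound `|z^n - w^n| ≤ n r^(n-1) |z - w|` lets each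
term of degree `n ≥ 2` contribute at most `r n |c_n| |z₁ - z₂|`, while the linear term of `g`
contributes `|b₁| |z₁ - z₂|`. Hence `|z₁ - z₂| ≤ (|b₁| + r (1 - |b₁|)) |z₁ - z₂|`, and the factor
is `< 1` because `r < 1` and `|b₁| < 1`. -/

theorem summable_add_two_mul_succ_of_add_one_mul {u : ℕ → ℝ}
    (hu : Summable fun n : ℕ => ((n : ℝ) + 1) * u n) :
    Summable fun n : ℕ => ((n : ℝ) + 2) * u (n + 1) := by
  refine ((summable_nat_add_iff 1).mpr hu).congr fun n => ?_
  push_cast; ring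

theorem tsum_add_one_mul_eq_add_tsum {u : ℕ → ℝ}
    (hu : Summable fun n : ℕ => ((n : ℝ) + 1) * u n) :
    ∑' n : ℕ, ((n : ℝ) + 1) * u n = u 0 + ∑' n : ℕ, ((n : ℝ) + 2) * u (n + 1) := by
  rw [hu.tsum_eq_zero_add]
  congr 1
  · simp
  · refine tsum_congr fun n => ?_
    push_cast; ring

theorem norm_sub_le_of_add_add_conj_eq {𝕜 : Type*} [RCLike 𝕜] {z₁ z₂ u₁ u₂ v₁ v₂ : 𝕜}
    (h : z₁ + u₁ + starRingEnd 𝕜 v₁ = z₂ + u₂ + starRingEnd 𝕜 v₂) :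
    ‖z₁ - z₂‖ ≤ ‖u₁ - u₂‖ + ‖v₁ - v₂‖ := by
  have hz : z₁ - z₂ = -(u₁ - u₂) - starRingEnd 𝕜 (v₁ - v₂) := by
    rw [map_sub]; linear_combination h
  rw [hz, ← norm_neg (u₁ - u₂), ← RCLike.norm_conj (v₁ - v₂)]
  exact norm_sub_le _ _

section PowerSeriesDifference

variable {𝕜 : Type*} [NormedField 𝕜]

theorem norm_pow_succ_sub_pow_succ_le {z w : 𝕜} {r : ℝ} (hz : ‖z‖ ≤ r) (hw : ‖w‖ ≤ r) (n : ℕ) :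
    ‖z ^ (n + 1) - w ^ (n + 1)‖ ≤ (n + 1) * r ^ n * ‖z - w‖ := by
  have hr : 0 ≤ r := (norm_nonneg z).trans hz
  rw [← geom_sum₂_mul, norm_mul]
  gcongr
  calc ‖∑ i ∈ Finset.range (n + 1), z ^ i * w ^ (n + 1 - 1 - i)‖
      ≤ ∑ i ∈ Finset.range (n + 1), ‖z‖ ^ i * ‖w‖ ^ (n - i) := by
        simpa only [norm_mul, norm_pow, add_tsub_cancel_right] using
          norm_sum_le (Finset.range (n + 1)) fun i => z ^ i * w ^ (n + 1 - 1 - i)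
    _ ≤ ∑ i ∈ Finset.range (n + 1), r ^ n := by
        refine Finset.sum_le_sum fun i hi => ?_
        rw [← pow_mul_pow_sub r (Nat.lt_succ_iff.mp (Finset.mem_range.mp hi))]
        gcongr
    _ = (n + 1) * r ^ n := by simp

variable [CompleteSpace 𝕜]

theorem summable_mul_pow_of_summable_mul_norm {c : ℕ → 𝕜} {μ : ℕ → ℝ} (e : ℕ → ℕ)
    (hμ : ∀ n, 1 ≤ μ n) (hc : Summable fun n => μ n * ‖c n‖) {z : 𝕜} (hz : ‖z‖ ≤ 1) :
    Summable fun n => c n * z ^ e n := by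
  refine Summable.of_norm_bounded hc fun n => ?_
  rw [norm_mul, norm_pow]
  exact (mul_le_of_le_one_right (norm_nonneg _) (pow_le_one₀ (norm_nonneg _) hz)).trans
    (le_mul_of_one_le_left (norm_nonneg _) (hμ n))

theorem norm_tsum_mul_pow_add_two_sub_le {c : ℕ → 𝕜}
    (hc : Summable fun n : ℕ => ((n : ℝ) + 2) * ‖c n‖) {z w : 𝕜} {r : ℝ} (hr : r ≤ 1)
    (hz : ‖z‖ ≤ r) (hw : ‖w‖ ≤ r) :
    ‖∑' n, c n * z ^ (n + 2) - ∑' n, c n * w ^ (n + 2)‖ ≤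
      r * (∑' n : ℕ, ((n : ℝ) + 2) * ‖c n‖) * ‖z - w‖ := by
  have hμ (n : ℕ) : 1 ≤ (n : ℝ) + 2 := by linarith [n.cast_nonneg (α := ℝ)]
  have hr₀ : 0 ≤ r := (norm_nonneg z).trans hz
  rw [← (summable_mul_pow_of_summable_mul_norm _ hμ hc (hz.trans hr)).tsum_sub
    (summable_mul_pow_of_summable_mul_norm _ hμ hc (hw.trans hr)), ← tsum_mul_left,
    ← tsum_mul_right]
  refine tsum_of_norm_bounded (((hc.mul_left r).mul_right _).hasSum) fun n => ?_
  rw [← mul_sub, norm_mul]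
  calc ‖c n‖ * ‖z ^ (n + 1 + 1) - w ^ (n + 1 + 1)‖
      ≤ ‖c n‖ * (((n + 1 : ℕ) + 1) * r ^ (n + 1) * ‖z - w‖) := by
        gcongr; exact norm_pow_succ_sub_pow_succ_le hz hw (n + 1)
    _ ≤ ‖c n‖ * ((n + 2) * r * ‖z - w‖) := by
        rw [Nat.cast_succ, add_assoc, one_add_one_eq_two]
        gcongr
        exact pow_le_of_le_one hr₀ hr n.succ_ne_zero
    _ = r * (((n : ℝ) + 2) * ‖c n‖) * ‖z - w‖ := by ring

theorem norm_tsum_mul_pow_add_one_sub_le {c : ℕ → 𝕜}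
    (hc : Summable fun n : ℕ => ((n : ℝ) + 1) * ‖c n‖) {z w : 𝕜} {r : ℝ} (hr : r ≤ 1)
    (hz : ‖z‖ ≤ r) (hw : ‖w‖ ≤ r) :
    ‖∑' n, c n * z ^ (n + 1) - ∑' n, c n * w ^ (n + 1)‖ ≤
      (‖c 0‖ + r * ∑' n : ℕ, ((n : ℝ) + 2) * ‖c (n + 1)‖) * ‖z - w‖ := by
  have hμ (n : ℕ) : 1 ≤ (n : ℝ) + 1 := by linarith [n.cast_nonneg (α := ℝ)]
  rw [(summable_mul_pow_of_summable_mul_norm _ hμ hc (hz.trans hr)).tsum_eq_zero_add,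
    (summable_mul_pow_of_summable_mul_norm _ hμ hc (hw.trans hr)).tsum_eq_zero_add,
    add_sub_add_comm, add_mul]
  refine (norm_add_le _ _).trans (add_le_add ?_ ?_)
  · rw [zero_add, pow_one, pow_one, ← mul_sub, norm_mul]
  · exact norm_tsum_mul_pow_add_two_sub_le (c := fun n => c (n + 1))
      (summable_add_two_mul_succ_of_add_one_mul (u := fun n => ‖c n‖) hc) hr hz hw

end PowerSeriesDifference

/-- If `h(z) = z + ∑_{n≥2} a_n z^n`, `g(z) = ∑_{n≥1} b_n z^n` with `|b_1| < 1`
and `∑_{n≥2} n|a_n| + ∑_{n≥1} n|b_n| ≤ 1`, then `f = h + conj g` is univalent on the unit disk. -/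
theorem harmonic_univalent
    (a b : ℕ → ℂ) (hb1 : ‖b 1‖ < 1)
    (hsa : Summable (fun n : ℕ => ((n + 2 : ℝ)) * ‖a (n + 2)‖))
    (hsb : Summable (fun n : ℕ => ((n + 1 : ℝ)) * ‖b (n + 1)‖))
    (hcoef : (∑' n : ℕ, ((n + 2 : ℝ)) * ‖a (n + 2)‖) +
             (∑' n : ℕ, ((n + 1 : ℝ)) * ‖b (n + 1)‖) ≤ 1)
    (f : ℂ → ℂ)
    (hf : ∀ z : ℂ, ‖z‖ < 1 →
      f z = (z + ∑' n : ℕ, a (n + 2) * z ^ (n + 2)) +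
            (starRingEnd ℂ) (∑' n : ℕ, b (n + 1) * z ^ (n + 1))) :
    ∀ z₁ z₂ : ℂ, ‖z₁‖ < 1 → ‖z₂‖ < 1 → z₁ ≠ z₂ → f z₁ ≠ f z₂ := by
  intro z₁ z₂ h₁ h₂ hne hfeq
  set r := max ‖z₁‖ ‖z₂‖
  have hr : r < 1 := max_lt h₁ h₂
  have hr₀ : 0 ≤ r := (norm_nonneg z₁).trans (le_max_left _ _)
  have hA := norm_tsum_mul_pow_add_two_sub_le (c := fun n => a (n + 2)) hsa hr.le
    (le_max_left ‖z₁‖ ‖z₂‖) (le_max_right _ _)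
  have hB := norm_tsum_mul_pow_add_one_sub_le (c := fun n => b (n + 1)) hsb hr.le
    (le_max_left ‖z₁‖ ‖z₂‖) (le_max_right _ _)
  have hd := norm_sub_le_of_add_add_conj_eq ((hf z₁ h₁).symm.trans (hfeq.trans (hf z₂ h₂)))
  have hd₀ : 0 < ‖z₁ - z₂‖ := norm_pos_iff.mpr (sub_ne_zero.mpr hne)
  rw [tsum_add_one_mul_eq_add_tsum hsb] at hcoef
  simp only [zero_add] at hcoef hB
  set Sa := ∑' n : ℕ, ((n : ℝ) + 2) * ‖a (n + 2)‖
  set Sb := ∑' n : ℕ, ((n : ℝ) + 2) * ‖b (n + 1 + 1)‖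
  have hκ : ‖b 1‖ + r * (Sa + Sb) < 1 := by
    nlinarith [mul_pos (sub_pos.2 hr) (sub_pos.2 hb1)]
  have hd' : ‖z₁ - z₂‖ ≤ (‖b 1‖ + r * (Sa + Sb)) * ‖z₁ - z₂‖ := by linarith
  exact (hd'.trans_lt (mul_lt_of_lt_one_left hd₀ hκ)).false
end

section
/- Let λ ≥ 0, k ≥ 0, 0 ≤ α < 1, u > v ≥ 0 integers with u ≥ 1. Let f = h + conj(g) with h(z) = z + ∑_{n≥2} a_n z^n, g(z) = ∑_{n≥1} b_n z^n, |a_1| = 1, |b_1| < 1, and suppose ∑_{n≥1}(ξ_n|a_n| + η_n|b_n|) ≤ 2 where ξ_n, η_n are as in the Al-Oboudi weight definitions. Then f ∈ k-USH(u,v,α,λ), i.e., Re{(1 + k e^{iφ}) D^u f(z)/D^v f(z) − k e^{iφ}} ≥ α for all z ∈ U and all real φ. -/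
/-!
Write `τ = k e^{iφ}`. For `α < 1`, `α ≤ Re w` is equivalent to `‖w - 1‖ ≤ ‖w + (1 - 2α)‖`,
which for `w = (1 + τ) D^u f / D^v f - τ` becomes
`‖(1 + τ)(D^u f - D^v f)‖ ≤ ‖(1 + τ) D^u f + (1 - 2α - τ) D^v f‖`.
Both sides are linear combinations of `D^u f` and `D^v f`, whose linear parts are `0` and
`(2 - 2α) z`. Expanding coefficientwise, the triangle inequality reduces the claim to
`‖(1 + τ)(U - d)‖ + ‖(1 + τ) U + (1 - 2α - τ) d‖ ≤ 2(1 - α)(d + (U - d)(1 + k)/(1 - α))`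
for `U = c_n^u` and `d = c_n^v` (the `a_n`) or `d = (-1)^(u-v) c_n^v` (the `b_n`), where
`c_n = 1 + (n - 1)λ`; the right-hand sides are `2(1 - α) ξ_n` and `2(1 - α) η_n`, so the
coefficient condition closes the estimate. The same condition, together with `‖b_1‖ < 1`,
keeps `D^v f(z)` away from `0`.
-/

open Complex

/-- The Al-Oboudi operator of order `t` applied to `f = h + conj g`, where
`h(z) = z + ∑_{n≥2} a_n z^n` and `g(z) = ∑_{n≥1} b_n z^n`:
`D^t f(z) = D^t h(z) + conj((−1)^t D^t g(z))`. -/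
noncomputable def alOboudiD (lam : ℝ) (t : ℕ) (a b : ℕ → ℂ) (z : ℂ) : ℂ :=
  (z + ∑' n : ℕ, ((1 + ((n : ℝ) + 1) * lam) ^ t : ℝ) * a (n + 2) * z ^ (n + 2)) +
    (starRingEnd ℂ)
      ((-1 : ℂ) ^ t * ∑' n : ℕ, ((1 + (n : ℝ) * lam) ^ t : ℝ) * b (n + 1) * z ^ (n + 1))

noncomputable def powerTail (c : ℕ → ℂ) (j : ℕ) (z : ℂ) : ℂ := ∑' n, c n * z ^ (n + j)

section PowerTail

variable {c d : ℕ → ℂ} {j : ℕ} {z : ℂ}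

lemma norm_mul_pow_add_le (hz : ‖z‖ ≤ 1) (n : ℕ) : ‖c n * z ^ (n + j)‖ ≤ ‖z‖ ^ j * ‖c n‖ := by
  rw [norm_mul, norm_pow, pow_add, mul_comm]
  gcongr
  exact mul_le_of_le_one_left (by positivity) (pow_le_one₀ (norm_nonneg z) hz)

lemma summable_mul_pow_add (hc : Summable fun n => ‖c n‖) (hz : ‖z‖ ≤ 1) :
    Summable fun n => c n * z ^ (n + j) :=
  (hc.mul_left _).of_norm_bounded (norm_mul_pow_add_le hz)

lemma norm_powerTail_le (hc : Summable fun n => ‖c n‖) (hz : ‖z‖ ≤ 1) :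
    ‖powerTail c j z‖ ≤ ‖z‖ ^ j * ∑' n, ‖c n‖ := by
  rw [← tsum_mul_left]
  exact tsum_of_norm_bounded (hc.mul_left _).hasSum (norm_mul_pow_add_le hz)

lemma norm_powerTail_add_norm_powerTail_le {C : ℕ → ℝ} (hC : Summable C)
    (hcd : ∀ n, ‖c n‖ + ‖d n‖ ≤ C n) (hz : ‖z‖ ≤ 1) :
    ‖powerTail c j z‖ + ‖powerTail d j z‖ ≤ ‖z‖ ^ j * ∑' n, C n := by
  have hc : Summable fun n => ‖c n‖ :=
    hC.of_nonneg_of_le (fun _ => norm_nonneg _) fun n => by linarith [hcd n, norm_nonneg (d n)]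
  have hd : Summable fun n => ‖d n‖ :=
    hC.of_nonneg_of_le (fun _ => norm_nonneg _) fun n => by linarith [hcd n, norm_nonneg (c n)]
  calc ‖powerTail c j z‖ + ‖powerTail d j z‖
      ≤ ‖z‖ ^ j * ∑' n, ‖c n‖ + ‖z‖ ^ j * ∑' n, ‖d n‖ :=
        add_le_add (norm_powerTail_le hc hz) (norm_powerTail_le hd hz)
    _ = ‖z‖ ^ j * ∑' n, (‖c n‖ + ‖d n‖) := by rw [hc.tsum_add hd, mul_add]
    _ ≤ ‖z‖ ^ j * ∑' n, C n := by gcongr; exacts [hc.add hd, hcd _]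

lemma mul_powerTail_add_mul_powerTail (hc : Summable fun n => c n * z ^ (n + j))
    (hd : Summable fun n => d n * z ^ (n + j)) (p q : ℂ) :
    p * powerTail c j z + q * powerTail d j z = powerTail (fun n => p * c n + q * d n) j z := by
  rw [powerTail, powerTail, ← tsum_mul_left, ← tsum_mul_left,
    ← (hc.mul_left p).tsum_add (hd.mul_left q), powerTail]
  congr 1 with n
  ring

lemma powerTail_one (hc : Summable fun n => c n * z ^ (n + 1)) :
    powerTail c 1 z = c 0 * z + powerTail (fun n => c (n + 1)) 2 z := by
  rw [powerTail, hc.tsum_eq_zero_add, powerTail, zero_add, pow_one]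

end PowerTail

def alOboudiFactor (lam : ℝ) (n : ℕ) : ℝ := 1 + ((n : ℝ) - 1) * lam

noncomputable def ushWeight (k alpha U d : ℝ) : ℝ := d + (U - d) * (1 + k) / (1 - alpha)

noncomputable def xiWeight (lam k alpha : ℝ) (u v n : ℕ) : ℝ :=
  ushWeight k alpha (alOboudiFactor lam n ^ u) (alOboudiFactor lam n ^ v)

noncomputable def etaWeight (lam k alpha : ℝ) (u v n : ℕ) : ℝ :=
  ushWeight k alpha (alOboudiFactor lam n ^ u) ((-1) ^ (u - v) * alOboudiFactor lam n ^ v)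

section Weights

variable {lam k alpha : ℝ}

lemma alOboudiFactor_one : alOboudiFactor lam 1 = 1 := by simp [alOboudiFactor]

lemma one_le_alOboudiFactor_succ (hlam : 0 ≤ lam) (n : ℕ) : 1 ≤ alOboudiFactor lam (n + 1) := by
  simp only [alOboudiFactor, Nat.cast_add, Nat.cast_one, add_sub_cancel_right]
  linarith [mul_nonneg n.cast_nonneg hlam]

lemma alOboudiFactor_succ_pow_nonneg (hlam : 0 ≤ lam) (t n : ℕ) :
    0 ≤ alOboudiFactor lam (n + 1) ^ t :=
  pow_nonneg (zero_le_one.trans (one_le_alOboudiFactor_succ hlam n)) t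

lemma alOboudiFactor_pow_le_pow (hlam : 0 ≤ lam) {u v : ℕ} (hvu : v ≤ u) (n : ℕ) :
    alOboudiFactor lam (n + 1) ^ v ≤ alOboudiFactor lam (n + 1) ^ u :=
  pow_le_pow_right₀ (one_le_alOboudiFactor_succ hlam n) hvu

lemma abs_alOboudiFactor_pow_le (hlam : 0 ≤ lam) {u v : ℕ} (hvu : v ≤ u) (n : ℕ) :
    |alOboudiFactor lam (n + 1) ^ v| ≤ alOboudiFactor lam (n + 1) ^ u := by
  rw [abs_of_nonneg (alOboudiFactor_succ_pow_nonneg hlam v n)]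
  exact alOboudiFactor_pow_le_pow hlam hvu n

lemma abs_neg_one_pow_mul_alOboudiFactor_pow_le (hlam : 0 ≤ lam) {u v : ℕ} (hvu : v ≤ u) (n : ℕ) :
    |(-1) ^ (u - v) * alOboudiFactor lam (n + 1) ^ v| ≤ alOboudiFactor lam (n + 1) ^ u := by
  rw [abs_mul, abs_pow, abs_neg, abs_one, one_pow, one_mul]
  exact abs_alOboudiFactor_pow_le hlam hvu n

lemma le_ushWeight (hk : 0 ≤ k) (halpha0 : 0 ≤ alpha) (halpha1 : alpha < 1) {U d : ℝ}
    (hdU : d ≤ U) : U ≤ ushWeight k alpha U d := by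
  have hquot : 1 ≤ (1 + k) / (1 - alpha) := by rw [le_div_iff₀ (by linarith)]; linarith
  rw [ushWeight, mul_div_assoc]
  nlinarith [mul_le_mul_of_nonneg_left hquot (sub_nonneg.2 hdU)]

lemma norm_add_norm_le_ushWeight (halpha0 : 0 ≤ alpha) (halpha1 : alpha < 1) {U d : ℝ}
    (habs : |d| ≤ U) {τ : ℂ} (hτ : ‖τ‖ ≤ k) :
    ‖(1 + τ) * U + -(1 + τ) * d‖ + ‖(1 + τ) * U + (1 - 2 * alpha - τ) * d‖ ≤
      2 * (1 - alpha) * ushWeight k alpha U d := by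
  obtain ⟨hUd, hdU⟩ := abs_le.mp habs
  have hdiff : ‖(1 + τ) * U + -(1 + τ) * d‖ ≤ (1 + k) * (U - d) := by
    rw [show (1 + τ) * U + -(1 + τ) * d = (1 + τ) * ((U - d : ℝ) : ℂ) by push_cast; ring,
      norm_mul, norm_real, Real.norm_of_nonneg (by linarith)]
    gcongr
    exact (norm_add_le _ _).trans (by rw [norm_one]; linarith)
  have hsum :
      ‖(1 + τ) * U + (1 - 2 * alpha - τ) * d‖ ≤ (U + (1 - 2 * alpha) * d) + k * (U - d) := by
    rw [show (1 + τ) * U + (1 - 2 * alpha - τ) * d =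
        ((U + (1 - 2 * alpha) * d : ℝ) : ℂ) + τ * ((U - d : ℝ) : ℂ) by push_cast; ring]
    refine (norm_add_le _ _).trans ?_
    rw [norm_real, norm_mul, norm_real, Real.norm_of_nonneg (by nlinarith),
      Real.norm_of_nonneg (by linarith)]
    gcongr
  have hweight : 2 * (1 - alpha) * ushWeight k alpha U d =
      (1 + k) * (U - d) + ((U + (1 - 2 * alpha) * d) + k * (U - d)) := by
    rw [ushWeight]
    field_simp [(by linarith : (1 : ℝ) - alpha ≠ 0)]
    ring
  linarith

variable {u v : ℕ}

lemma xiWeight_one : xiWeight lam k alpha u v 1 = 1 := by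
  simp [xiWeight, ushWeight, alOboudiFactor_one]

lemma alOboudiFactor_pow_le_xiWeight (hlam : 0 ≤ lam) (hk : 0 ≤ k) (halpha0 : 0 ≤ alpha)
    (halpha1 : alpha < 1) (hvu : v ≤ u) {t : ℕ} (ht : t ≤ u) (n : ℕ) :
    alOboudiFactor lam (n + 1) ^ t ≤ xiWeight lam k alpha u v (n + 1) :=
  (alOboudiFactor_pow_le_pow hlam ht n).trans
    (le_ushWeight hk halpha0 halpha1 (alOboudiFactor_pow_le_pow hlam hvu n))

lemma alOboudiFactor_pow_le_etaWeight (hlam : 0 ≤ lam) (hk : 0 ≤ k) (halpha0 : 0 ≤ alpha)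
    (halpha1 : alpha < 1) (hvu : v ≤ u) {t : ℕ} (ht : t ≤ u) (n : ℕ) :
    alOboudiFactor lam (n + 1) ^ t ≤ etaWeight lam k alpha u v (n + 1) :=
  (alOboudiFactor_pow_le_pow hlam ht n).trans (le_ushWeight hk halpha0 halpha1
    ((le_abs_self _).trans (abs_neg_one_pow_mul_alOboudiFactor_pow_le hlam hvu n)))

end Weights

section AlOboudi

variable {lam : ℝ} {a b : ℕ → ℂ} {z : ℂ}

lemma alOboudiD_eq_powerTail (t : ℕ) :
    alOboudiD lam t a b z =
      z + powerTail (fun n => (alOboudiFactor lam (n + 2) ^ t : ℝ) * a (n + 2)) 2 z +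
        (starRingEnd ℂ) ((-1) ^ t *
          powerTail (fun n => (alOboudiFactor lam (n + 1) ^ t : ℝ) * b (n + 1)) 1 z) := by
  simp only [alOboudiD, powerTail, alOboudiFactor]
  congr 5 with n <;> push_cast <;> ring

lemma norm_alOboudiFactor_pow_mul (hlam : 0 ≤ lam) (t n : ℕ) (x : ℂ) :
    ‖(alOboudiFactor lam (n + 1) ^ t : ℝ) * x‖ = alOboudiFactor lam (n + 1) ^ t * ‖x‖ := by
  rw [norm_mul, norm_real, Real.norm_of_nonneg (alOboudiFactor_succ_pow_nonneg hlam t n)]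

lemma linear_combination_alOboudiD (hlam : 0 ≤ lam) {u v : ℕ} (hvu : v ≤ u) (hz : ‖z‖ ≤ 1)
    (ha : Summable fun n => alOboudiFactor lam (n + 2) ^ u * ‖a (n + 2)‖)
    (hb : Summable fun n => alOboudiFactor lam (n + 1) ^ u * ‖b (n + 1)‖) (p q : ℂ) :
    p * alOboudiD lam u a b z + q * alOboudiD lam v a b z =
      (p + q) * z +
        powerTail (fun n => (p * (alOboudiFactor lam (n + 2) ^ u : ℝ) +
          q * (alOboudiFactor lam (n + 2) ^ v : ℝ)) * a (n + 2)) 2 z +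
        (starRingEnd ℂ) ((-1) ^ u *
          powerTail (fun n => ((starRingEnd ℂ) p * (alOboudiFactor lam (n + 1) ^ u : ℝ) +
            (starRingEnd ℂ) q * ((-1) ^ (u - v) * alOboudiFactor lam (n + 1) ^ v : ℝ)) *
              b (n + 1)) 1 z) := by
  have hsa : ∀ t ≤ u, Summable fun n =>
      ((alOboudiFactor lam (n + 2) ^ t : ℝ) : ℂ) * a (n + 2) * z ^ (n + 2) := fun t ht =>
    summable_mul_pow_add (ha.of_nonneg_of_le (fun _ => norm_nonneg _) fun n => by
      rw [norm_alOboudiFactor_pow_mul hlam]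
      gcongr
      exact one_le_alOboudiFactor_succ hlam _) hz
  have hsb : ∀ t ≤ u, Summable fun n =>
      ((alOboudiFactor lam (n + 1) ^ t : ℝ) : ℂ) * b (n + 1) * z ^ (n + 1) := fun t ht =>
    summable_mul_pow_add (hb.of_nonneg_of_le (fun _ => norm_nonneg _) fun n => by
      rw [norm_alOboudiFactor_pow_mul hlam]
      gcongr
      exact one_le_alOboudiFactor_succ hlam _) hz
  have hsign : (-1 : ℂ) ^ v = (-1) ^ u * (-1) ^ (u - v) := by
    rw [← pow_add, show u + (u - v) = v + 2 * (u - v) by omega, pow_add, pow_mul, neg_one_sq,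
      one_pow, mul_one]
  have hA := mul_powerTail_add_mul_powerTail (hsa u le_rfl) (hsa v hvu) p q
  have hB := mul_powerTail_add_mul_powerTail (hsb u le_rfl) (hsb v hvu)
    ((starRingEnd ℂ) p) ((starRingEnd ℂ) q * (-1) ^ (u - v))
  simp only [alOboudiD_eq_powerTail]
  simp only [add_mul, mul_assoc, ofReal_mul, ofReal_pow, ofReal_neg, ofReal_one] at hA hB ⊢
  rw [← hA, ← hB]
  simp only [map_add, map_mul, map_pow, map_neg, map_one, conj_conj, hsign]
  ring

end AlOboudi

section Triangle

variable {ε : ℂ}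

lemma norm_sub_sub_le_norm_add_add_conj_mul (hε : ‖ε‖ = 1) (w x y : ℂ) :
    ‖w‖ - ‖x‖ - ‖y‖ ≤ ‖w + x + (starRingEnd ℂ) (ε * y)‖ := by
  have h := norm_sub_le (w + x + (starRingEnd ℂ) (ε * y)) (x + (starRingEnd ℂ) (ε * y))
  rw [show w + x + (starRingEnd ℂ) (ε * y) - (x + (starRingEnd ℂ) (ε * y)) = w by ring] at h
  have h' := norm_add_le x ((starRingEnd ℂ) (ε * y))
  rw [RCLike.norm_conj, norm_mul, hε, one_mul] at h'
  linarith

lemma norm_add_conj_mul_le_norm_add_add_conj_mul (hε : ‖ε‖ = 1) {w x₁ x₂ y₁ y₂ : ℂ}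
    (h : ‖x₁‖ + ‖y₁‖ + (‖x₂‖ + ‖y₂‖) ≤ ‖w‖) :
    ‖x₁ + (starRingEnd ℂ) (ε * x₂)‖ ≤ ‖w + y₁ + (starRingEnd ℂ) (ε * y₂)‖ := by
  have hx := norm_add_le x₁ ((starRingEnd ℂ) (ε * x₂))
  rw [RCLike.norm_conj, norm_mul, hε, one_mul] at hx
  linarith [norm_sub_sub_le_norm_add_add_conj_mul hε w y₁ y₂]

end Triangle

lemma summable_mul_norm_of_le {f g : ℕ → ℝ} {e : ℕ → ℂ} (hg : Summable fun n => g n * ‖e n‖)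
    (hf : ∀ n, 0 ≤ f n) (hfg : ∀ n, f n ≤ g n) : Summable fun n => f n * ‖e n‖ :=
  hg.of_nonneg_of_le (fun n => mul_nonneg (hf n) (norm_nonneg _))
    fun n => mul_le_mul_of_nonneg_right (hfg n) (norm_nonneg _)

section Estimates

variable {lam k alpha : ℝ} {u v : ℕ} {a b : ℕ → ℂ} {z : ℂ}

lemma norm_mul_sub_alOboudiD_le {τ : ℂ} (hlam : 0 ≤ lam) (halpha0 : 0 ≤ alpha)
    (halpha1 : alpha < 1) (hvu : v ≤ u) (hτ : ‖τ‖ ≤ k) (hz : ‖z‖ ≤ 1)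
    (ha : Summable fun n => xiWeight lam k alpha u v (n + 2) * ‖a (n + 2)‖)
    (hb : Summable fun n => etaWeight lam k alpha u v (n + 1) * ‖b (n + 1)‖)
    (hcoef : ∑' n, xiWeight lam k alpha u v (n + 2) * ‖a (n + 2)‖ +
      ∑' n, etaWeight lam k alpha u v (n + 1) * ‖b (n + 1)‖ ≤ 1) :
    ‖(1 + τ) * (alOboudiD lam u a b z - alOboudiD lam v a b z)‖ ≤
      ‖(1 + τ) * alOboudiD lam u a b z + (1 - 2 * alpha - τ) * alOboudiD lam v a b z‖ := by
  have hk : 0 ≤ k := (norm_nonneg τ).trans hτ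
  have hxi := alOboudiFactor_pow_le_xiWeight hlam hk halpha0 halpha1 hvu le_rfl
  have heta := alOboudiFactor_pow_le_etaWeight hlam hk halpha0 halpha1 hvu le_rfl
  have hpow := alOboudiFactor_succ_pow_nonneg hlam u
  have ha' := summable_mul_norm_of_le ha (fun n => hpow (n + 1)) fun n => hxi (n + 1)
  have hb' := summable_mul_norm_of_le hb hpow heta
  have hSa : 0 ≤ ∑' n, xiWeight lam k alpha u v (n + 2) * ‖a (n + 2)‖ :=
    tsum_nonneg fun n => mul_nonneg ((hpow _).trans (hxi _)) (norm_nonneg _)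
  rw [show (1 + τ) * (alOboudiD lam u a b z - alOboudiD lam v a b z) =
      (1 + τ) * alOboudiD lam u a b z + -(1 + τ) * alOboudiD lam v a b z by ring,
    linear_combination_alOboudiD hlam hvu hz ha' hb', add_neg_cancel, zero_mul, zero_add,
    linear_combination_alOboudiD hlam hvu hz ha' hb']
  refine norm_add_conj_mul_le_norm_add_add_conj_mul (by simp)
    ((add_le_add (norm_powerTail_add_norm_powerTail_le (ha.mul_left (2 * (1 - alpha)))
      (fun n => ?_) hz) (norm_powerTail_add_norm_powerTail_le (hb.mul_left (2 * (1 - alpha)))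
      (fun n => ?_) hz)).trans ?_)
  · rw [norm_mul, norm_mul, ← add_mul, ← mul_assoc]
    gcongr
    exact norm_add_norm_le_ushWeight halpha0 halpha1 (abs_alOboudiFactor_pow_le hlam hvu _) hτ
  · simp only [norm_mul, ← add_mul, ← mul_assoc, map_add, map_one, map_neg, map_sub, map_mul,
      map_ofNat, conj_ofReal]
    gcongr
    exact norm_add_norm_le_ushWeight halpha0 halpha1
      (abs_neg_one_pow_mul_alOboudiFactor_pow_le hlam hvu _) ((RCLike.norm_conj τ).trans_le hτ)
  · rw [tsum_mul_left, tsum_mul_left, pow_one,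
      show 1 + τ + (1 - 2 * alpha - τ) = ((2 * (1 - alpha) : ℝ) : ℂ) by push_cast; ring,
      norm_mul, norm_real, Real.norm_of_nonneg (by linarith)]
    have hz2 : ‖z‖ ^ 2 ≤ ‖z‖ := pow_le_of_le_one (norm_nonneg z) hz two_ne_zero
    have hc : 0 ≤ 2 * (1 - alpha) := by linarith
    nlinarith [mul_le_mul_of_nonneg_right hz2 (mul_nonneg hc hSa),
      mul_le_mul_of_nonneg_left hcoef (mul_nonneg hc (norm_nonneg z))]

end Estimates

lemma alOboudiD_ne_zero {lam : ℝ} {t : ℕ} {a b : ℕ → ℂ} {z : ℂ} (hlam : 0 ≤ lam) (hz0 : z ≠ 0)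
    (hz : ‖z‖ < 1) (hb1 : ‖b 1‖ < 1)
    (ha : Summable fun n => alOboudiFactor lam (n + 2) ^ t * ‖a (n + 2)‖)
    (hb : Summable fun n => alOboudiFactor lam (n + 1) ^ t * ‖b (n + 1)‖)
    (hcoef : ∑' n, alOboudiFactor lam (n + 2) ^ t * ‖a (n + 2)‖ +
      ∑' n, alOboudiFactor lam (n + 1) ^ t * ‖b (n + 1)‖ ≤ 1) :
    alOboudiD lam t a b z ≠ 0 := by
  have hna : Summable fun n => ‖((alOboudiFactor lam (n + 2) ^ t : ℝ) : ℂ) * a (n + 2)‖ := by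
    simpa only [norm_alOboudiFactor_pow_mul hlam] using ha
  have hnb : Summable fun n => ‖((alOboudiFactor lam (n + 1) ^ t : ℝ) : ℂ) * b (n + 1)‖ := by
    simpa only [norm_alOboudiFactor_pow_mul hlam] using hb
  have hsplit := hb.tsum_eq_zero_add
  simp only [zero_add, alOboudiFactor_one, one_pow, one_mul] at hsplit
  have hA : ‖powerTail (fun n => ((alOboudiFactor lam (n + 2) ^ t : ℝ) : ℂ) * a (n + 2)) 2 z‖ ≤
      ‖z‖ ^ 2 * ∑' n, alOboudiFactor lam (n + 2) ^ t * ‖a (n + 2)‖ := by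
    simpa only [norm_alOboudiFactor_pow_mul hlam] using norm_powerTail_le hna hz.le
  have hB : ‖powerTail (fun n =>
        ((alOboudiFactor lam (n + 1 + 1) ^ t : ℝ) : ℂ) * b (n + 1 + 1)) 2 z‖ ≤
      ‖z‖ ^ 2 * ∑' n, alOboudiFactor lam (n + 1 + 1) ^ t * ‖b (n + 1 + 1)‖ := by
    simpa only [norm_alOboudiFactor_pow_mul hlam] using
      norm_powerTail_le ((summable_nat_add_iff 1).2 hnb) hz.le
  -- `c_1 = 1` makes the `b_1`-term exactly `b_1 z`; all other terms carry `‖z‖ ^ 2`, so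
  -- `‖D^t f(z)‖ ≥ ‖z‖ (1 - ‖b_1‖) (1 - ‖z‖)`.
  rw [alOboudiD_eq_powerTail, powerTail_one (summable_mul_pow_add hnb hz.le)]
  simp only [zero_add, alOboudiFactor_one, one_pow, ofReal_one, one_mul]
  refine norm_pos_iff.mp
    (lt_of_lt_of_le ?_ (norm_sub_sub_le_norm_add_add_conj_mul (by simp) _ _ _))
  have hb1z := norm_add_le (b 1 * z)
    (powerTail (fun n => ((alOboudiFactor lam (n + 1 + 1) ^ t : ℝ) : ℂ) * b (n + 1 + 1)) 2 z)
  rw [norm_mul] at hb1z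
  have hz0' : 0 < ‖z‖ := norm_pos_iff.mpr hz0
  nlinarith [mul_pos (mul_pos hz0' (sub_pos.2 hb1)) (sub_pos.2 hz)]

lemma le_re_of_norm_sub_one_le {alpha : ℝ} (halpha : alpha < 1) {w : ℂ}
    (h : ‖w - 1‖ ≤ ‖w + (1 - 2 * alpha)‖) : alpha ≤ w.re := by
  have h2 := pow_le_pow_left₀ (norm_nonneg _) h 2
  simp only [Complex.sq_norm, normSq_apply, sub_re, add_re, sub_im, add_im, one_re, one_im,
    sub_zero, mul_re, mul_im, re_ofNat, im_ofNat, ofReal_re, ofReal_im] at h2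
  nlinarith

lemma le_re_mul_div_sub {alpha : ℝ} (halpha : alpha < 1) {x y τ : ℂ} (hy : y ≠ 0)
    (h : ‖(1 + τ) * (x - y)‖ ≤ ‖(1 + τ) * x + (1 - 2 * alpha - τ) * y‖) :
    alpha ≤ ((1 + τ) * x / y - τ).re := by
  refine le_re_of_norm_sub_one_le halpha (le_of_mul_le_mul_right ?_ (norm_pos_iff.mpr hy))
  have hsub : ((1 + τ) * x / y - τ - 1) * y = (1 + τ) * (x - y) := by field_simp; ring
  have hadd : ((1 + τ) * x / y - τ + (1 - 2 * alpha)) * y =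
      (1 + τ) * x + (1 - 2 * alpha - τ) * y := by field_simp; ring
  rwa [← norm_mul, ← norm_mul, hsub, hadd]

theorem kUSH_sufficient_general (lam k alpha : ℝ) (u v : ℕ)
    (hlam : 0 ≤ lam) (hk : 0 ≤ k) (halpha0 : 0 ≤ alpha) (halpha1 : alpha < 1)
    (huv : v < u)
    (a b : ℕ → ℂ) (ha1 : ‖a 1‖ = 1) (hb1 : ‖b 1‖ < 1)
    (xi eta : ℕ → ℝ)
    (hxi : ∀ n : ℕ, xi n = (1 + ((n : ℝ) - 1) * lam) ^ v +
      ((1 + ((n : ℝ) - 1) * lam) ^ u - (1 + ((n : ℝ) - 1) * lam) ^ v) * (1 + k) / (1 - alpha))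
    (heta : ∀ n : ℕ, eta n = (-1 : ℝ) ^ (u - v) * (1 + ((n : ℝ) - 1) * lam) ^ v +
      ((1 + ((n : ℝ) - 1) * lam) ^ u -
        (-1 : ℝ) ^ (u - v) * (1 + ((n : ℝ) - 1) * lam) ^ v) * (1 + k) / (1 - alpha))
    (hsa : Summable (fun n : ℕ => xi (n + 2) * ‖a (n + 2)‖))
    (hsb : Summable (fun n : ℕ => eta (n + 1) * ‖b (n + 1)‖))
    (hcoef : xi 1 * ‖a 1‖ + (∑' n : ℕ, xi (n + 2) * ‖a (n + 2)‖) +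
             (∑' n : ℕ, eta (n + 1) * ‖b (n + 1)‖) ≤ 2) :
    ∀ z : ℂ, ‖z‖ < 1 → z ≠ 0 → ∀ φ : ℝ,
      alpha ≤ ((1 + (k : ℂ) * Complex.exp (φ * Complex.I)) *
          alOboudiD lam u a b z / alOboudiD lam v a b z -
          (k : ℂ) * Complex.exp (φ * Complex.I)).re := by
  intro z hz hz0 φ
  obtain rfl : xi = xiWeight lam k alpha u v := funext hxi
  obtain rfl : eta = etaWeight lam k alpha u v := funext heta
  have hsum : ∑' n, xiWeight lam k alpha u v (n + 2) * ‖a (n + 2)‖ +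
      ∑' n, etaWeight lam k alpha u v (n + 1) * ‖b (n + 1)‖ ≤ 1 := by
    rw [xiWeight_one, ha1] at hcoef
    linarith
  have hpow := alOboudiFactor_succ_pow_nonneg hlam v
  have hxi := alOboudiFactor_pow_le_xiWeight hlam hk halpha0 halpha1 huv.le huv.le
  have heta := alOboudiFactor_pow_le_etaWeight hlam hk halpha0 halpha1 huv.le huv.le
  have hsav := summable_mul_norm_of_le hsa (fun n => hpow (n + 1)) fun n => hxi (n + 1)
  have hsbv := summable_mul_norm_of_le hsb hpow heta
  have hsumv : ∑' n, alOboudiFactor lam (n + 2) ^ v * ‖a (n + 2)‖ +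
      ∑' n, alOboudiFactor lam (n + 1) ^ v * ‖b (n + 1)‖ ≤ 1 :=
    (add_le_add (hsav.tsum_le_tsum (fun n => by gcongr; exact hxi (n + 1)) hsa)
      (hsbv.tsum_le_tsum (fun n => by gcongr; exact heta n) hsb)).trans hsum
  have hD : alOboudiD lam v a b z ≠ 0 := alOboudiD_ne_zero hlam hz0 hz hb1 hsav hsbv hsumv
  refine le_re_mul_div_sub halpha1 hD (norm_mul_sub_alOboudiD_le hlam halpha0 halpha1 huv.le
    (le_of_eq ?_) hz.le hsa hsb hsum)
  simp [norm_exp, abs_of_nonneg hk]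

/-- sufficiency of the coefficient condition for membership in k-USH(u,v,α,λ). -/
theorem kUSH_sufficient (lam k alpha : ℝ) (u v : ℕ)
    (hlam : 0 ≤ lam) (hk : 0 ≤ k) (halpha0 : 0 ≤ alpha) (halpha1 : alpha < 1)
    (hu : 1 ≤ u) (huv : v < u)
    (a b : ℕ → ℂ) (ha1 : ‖a 1‖ = 1) (hb1 : ‖b 1‖ < 1)
    (xi eta : ℕ → ℝ)
    (hxi : ∀ n : ℕ, xi n = (1 + ((n : ℝ) - 1) * lam) ^ v +
      ((1 + ((n : ℝ) - 1) * lam) ^ u - (1 + ((n : ℝ) - 1) * lam) ^ v) * (1 + k) / (1 - alpha))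
    (heta : ∀ n : ℕ, eta n = (-1 : ℝ) ^ (u - v) * (1 + ((n : ℝ) - 1) * lam) ^ v +
      ((1 + ((n : ℝ) - 1) * lam) ^ u -
        (-1 : ℝ) ^ (u - v) * (1 + ((n : ℝ) - 1) * lam) ^ v) * (1 + k) / (1 - alpha))
    (hsa : Summable (fun n : ℕ => xi (n + 2) * ‖a (n + 2)‖))
    (hsb : Summable (fun n : ℕ => eta (n + 1) * ‖b (n + 1)‖))
    (hcoef : xi 1 * ‖a 1‖ + (∑' n : ℕ, xi (n + 2) * ‖a (n + 2)‖) +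
             (∑' n : ℕ, eta (n + 1) * ‖b (n + 1)‖) ≤ 2) :
    ∀ z : ℂ, ‖z‖ < 1 → z ≠ 0 → ∀ φ : ℝ,
      alpha ≤ ((1 + (k : ℂ) * Complex.exp (φ * Complex.I)) *
          alOboudiD lam u a b z / alOboudiD lam v a b z -
          (k : ℂ) * Complex.exp (φ * Complex.I)).re :=
  kUSH_sufficient_general lam k alpha u v hlam hk halpha0 halpha1 huv a b ha1 hb1 xi eta hxi heta
    hsa hsb hcoef
end

section
/- (Distortion bound, upper estimate) Let f_u ∈ k-UTH(u,v,α,λ), i.e., f_u(z) = z − ∑_{n≥2}|a_n| z^n + (−1)^{u−1} ∑_{n≥1}|b_n| conj(z)^n with coefficients satisfying ∑_{n≥1}(ξ_n|a_n| + η_n|b_n|) ≤ 2 with |a_1| = 1. Then for |z| = r < 1: |f_u(z)| ≤ (1 + |b_1|)r + (σ − τ|b_1|) r^2, where σ = (1−α)/((1+λ)^u(1+k) − (1+λ)^v(k+α)) and τ = ((1+k) − (−1)^{v−u}(k+α))/((1+λ)^u(1+k) − (1+λ)^v(k+α)). -/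
open Complex

/-- upper distortion bound for f_u ∈ k-UTH(u,v,α,λ). -/
theorem kUTH_distortion_upper (lam k alpha : ℝ) (u v : ℕ)
    (hlam : 0 < lam) (hk : 0 ≤ k) (halpha0 : 0 ≤ alpha) (halpha1 : alpha < 1)
    (hu : 1 ≤ u) (huv : v < u)
    (hden : 0 < (1 + lam) ^ u * (1 + k) - (1 + lam) ^ v * (k + alpha))
    (a b : ℕ → ℝ) (ha : ∀ n, 0 ≤ a n) (hb : ∀ n, 0 ≤ b n)
    (ha1 : a 1 = 1) (hb1 : b 1 < 1)
    (xi eta : ℕ → ℝ)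
    (hxi : ∀ n : ℕ, xi n = (1 + ((n : ℝ) - 1) * lam) ^ v +
      ((1 + ((n : ℝ) - 1) * lam) ^ u - (1 + ((n : ℝ) - 1) * lam) ^ v) * (1 + k) / (1 - alpha))
    (heta : ∀ n : ℕ, eta n = (-1 : ℝ) ^ (u - v) * (1 + ((n : ℝ) - 1) * lam) ^ v +
      ((1 + ((n : ℝ) - 1) * lam) ^ u -
        (-1 : ℝ) ^ (u - v) * (1 + ((n : ℝ) - 1) * lam) ^ v) * (1 + k) / (1 - alpha))
    (hsa : Summable (fun n : ℕ => xi (n + 2) * a (n + 2)))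
    (hsb : Summable (fun n : ℕ => eta (n + 1) * b (n + 1)))
    (hcoef : xi 1 * a 1 + (∑' n : ℕ, xi (n + 2) * a (n + 2)) +
             (∑' n : ℕ, eta (n + 1) * b (n + 1)) ≤ 2)
    (f : ℂ → ℂ)
    (hf : ∀ z : ℂ, ‖z‖ < 1 →
      f z = z - (∑' n : ℕ, (a (n + 2) : ℂ) * z ^ (n + 2)) +
        (-1 : ℂ) ^ (u - 1) * ∑' n : ℕ, (b (n + 1) : ℂ) * ((starRingEnd ℂ) z) ^ (n + 1)) :
    ∀ z : ℂ, ‖z‖ < 1 →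
      ‖f z‖ ≤ (1 + b 1) * ‖z‖ +
        ((1 - alpha) / ((1 + lam) ^ u * (1 + k) - (1 + lam) ^ v * (k + alpha)) -
          ((1 + k) - (-1 : ℝ) ^ (u - v) * (k + alpha)) /
            ((1 + lam) ^ u * (1 + k) - (1 + lam) ^ v * (k + alpha)) * b 1) * ‖z‖ ^ 2 := by
  intro z hz
  have hr0 : (0:ℝ) ≤ ‖z‖ := norm_nonneg z
  set r : ℝ := ‖z‖ with hrdef
  have h1a : (0:ℝ) < 1 - alpha := by linarith
  have hk1 : (0:ℝ) < 1 + k := by linarith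
  obtain ⟨d, hd⟩ : ∃ d, u = v + d := ⟨u - v, by omega⟩
  have huvd : u - v = d := by omega
  set t : ℝ := 1 + lam with ht
  have ht1 : (1:ℝ) < t := by rw [ht]; linarith
  have htpos : (0:ℝ) < t := by linarith
  set D : ℝ := (1 + lam) ^ u * (1 + k) - (1 + lam) ^ v * (k + alpha) with hDdef
  have hDpos : 0 < D := hden
  have hDfac : D = t ^ v * (t ^ d * (1 + k) - (k + alpha)) := by
    rw [hDdef, ht, hd, pow_add]; ring
  have hinner : 0 < t ^ d * (1 + k) - (k + alpha) := by
    by_contra h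
    push_neg at h
    have h1 : t ^ v * (t ^ d * (1 + k) - (k + alpha)) ≤ 0 :=
      mul_nonpos_of_nonneg_of_nonpos (by positivity) h
    rw [← hDfac] at h1
    exact absurd hDpos h1.not_gt
  have hmain : ∀ s : ℝ, t ≤ s → D ≤ s ^ u * (1 + k) - s ^ v * (k + alpha) := by
    intro s hs
    have hs0 : (0:ℝ) ≤ t := htpos.le
    have hsv : t ^ v ≤ s ^ v := pow_le_pow_left₀ hs0 hs v
    have hsd : t ^ d ≤ s ^ d := pow_le_pow_left₀ hs0 hs d
    have h2 : t ^ d * (1 + k) - (k + alpha) ≤ s ^ d * (1 + k) - (k + alpha) := by nlinarith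
    calc D = t ^ v * (t ^ d * (1 + k) - (k + alpha)) := hDfac
      _ ≤ s ^ v * (s ^ d * (1 + k) - (k + alpha)) :=
          mul_le_mul hsv h2 hinner.le (pow_nonneg (htpos.le.trans hs) v)
      _ = s ^ u * (1 + k) - s ^ v * (k + alpha) := by rw [hd, pow_add]; ring
  have hxiD : ∀ s : ℝ, (1 - alpha) * (s ^ v + (s ^ u - s ^ v) * (1 + k) / (1 - alpha))
      = s ^ u * (1 + k) - s ^ v * (k + alpha) := by
    intro s; field_simp; ring
  have hetaD : ∀ s : ℝ, (1 - alpha) * ((-1:ℝ) ^ d * s ^ v +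
      (s ^ u - (-1:ℝ) ^ d * s ^ v) * (1 + k) / (1 - alpha))
      = s ^ u * (1 + k) - (-1:ℝ) ^ d * s ^ v * (k + alpha) := by
    intro s; field_simp; ring
  have hneg1 : ((-1:ℝ) ^ d = 1 ∨ (-1:ℝ) ^ d = -1) := neg_one_pow_eq_or ℝ d
  have hc2 : (1:ℝ) + (((2:ℕ):ℝ) - 1) * lam = t := by push_cast; rw [ht]; ring
  have hxi2 : (1 - alpha) * xi 2 = D := by
    rw [hxi 2, hc2, hxiD t, hDdef, ht]
  have hxi2pos : 0 < xi 2 := by nlinarith [hxi2, hDpos, h1a]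
  have hc1 : (1:ℝ) + (((1:ℕ):ℝ) - 1) * lam = 1 := by push_cast; ring
  have heta1 : (1 - alpha) * eta 1 = (1 + k) - (-1:ℝ) ^ d * (k + alpha) := by
    rw [heta 1, huvd, hc1, hetaD 1]
    simp
  have hxi1 : xi 1 = 1 := by
    rw [hxi 1, hc1]
    simp
  have hsge : ∀ n : ℕ, t ≤ 1 + ((n:ℝ) + 1) * lam := by
    intro n
    have h1 : (1:ℝ) ≤ (n:ℝ) + 1 := by
      have := Nat.cast_nonneg (α := ℝ) n; linarith
    rw [ht]; nlinarith
  have hxicast : ∀ n : ℕ, (((n + 2 : ℕ)):ℝ) - 1 = (n:ℝ) + 1 := by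
    intro n; push_cast; ring
  have hxilow : ∀ n : ℕ, xi 2 ≤ xi (n + 2) := by
    intro n
    rw [← mul_le_mul_iff_right₀ h1a, hxi2, hxi (n + 2), hxicast n, hxiD]
    exact hmain _ (hsge n)
  have hetalow : ∀ n : ℕ, xi 2 ≤ eta (n + 2) := by
    intro n
    rw [← mul_le_mul_iff_right₀ h1a, hxi2, heta (n + 2), huvd, hxicast n, hetaD]
    have hsp : (0:ℝ) ≤ (1 + ((n:ℝ) + 1) * lam) ^ v := by positivity
    have hx : (0:ℝ) ≤ (1 + ((n:ℝ) + 1) * lam) ^ v * (k + alpha) :=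
      mul_nonneg hsp (by linarith)
    have h3 : (-1:ℝ) ^ d * (1 + ((n:ℝ) + 1) * lam) ^ v * (k + alpha)
        ≤ (1 + ((n:ℝ) + 1) * lam) ^ v * (k + alpha) := by
      rcases hneg1 with h | h <;> rw [h] <;> linarith
    have h4 := hmain _ (hsge n)
    linarith
  have hidx : ∀ n : ℕ, n + 1 + 1 = n + 2 := fun n => rfl
  -- summability
  have hA : Summable (fun n : ℕ => a (n + 2)) := by
    apply Summable.of_nonneg_of_le (fun n => ha _) (fun n => ?_) (hsa.mul_left (xi 2)⁻¹)
    rw [← mul_le_mul_iff_right₀ hxi2pos, ← mul_assoc, mul_inv_cancel₀ hxi2pos.ne', one_mul]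
    exact mul_le_mul_of_nonneg_right (hxilow n) (ha _)
  have hsb2 : Summable (fun n : ℕ => eta (n + 2) * b (n + 2)) :=
    (summable_nat_add_iff (f := fun n : ℕ => eta (n + 1) * b (n + 1)) 1).mpr hsb
  have hB : Summable (fun n : ℕ => b (n + 2)) := by
    apply Summable.of_nonneg_of_le (fun n => hb _) (fun n => ?_) (hsb2.mul_left (xi 2)⁻¹)
    rw [← mul_le_mul_iff_right₀ hxi2pos, ← mul_assoc, mul_inv_cancel₀ hxi2pos.ne', one_mul]
    exact mul_le_mul_of_nonneg_right (hetalow n) (hb _)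
  have hB1 : Summable (fun n : ℕ => b (n + 1)) :=
    (summable_nat_add_iff (f := fun n : ℕ => b (n + 1)) 1).mp hB
  -- key coefficient bound
  have hsplit : (∑' n : ℕ, eta (n + 1) * b (n + 1))
      = eta 1 * b 1 + ∑' n : ℕ, eta (n + 2) * b (n + 2) := Summable.tsum_eq_zero_add hsb
  have hSa : xi 2 * (∑' n : ℕ, a (n + 2)) ≤ ∑' n : ℕ, xi (n + 2) * a (n + 2) := by
    rw [← tsum_mul_left]
    exact Summable.tsum_le_tsum (fun n => mul_le_mul_of_nonneg_right (hxilow n) (ha _))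
      (hA.mul_left _) hsa
  have hSb : xi 2 * (∑' n : ℕ, b (n + 2)) ≤ ∑' n : ℕ, eta (n + 2) * b (n + 2) := by
    rw [← tsum_mul_left]
    exact Summable.tsum_le_tsum (fun n => mul_le_mul_of_nonneg_right (hetalow n) (hb _))
      (hB.mul_left _) hsb2
  have hkey : xi 2 * ((∑' n : ℕ, a (n + 2)) + (∑' n : ℕ, b (n + 2))) ≤ 1 - eta 1 * b 1 := by
    rw [hsplit, hxi1, ha1] at hcoef
    rw [mul_add]
    linarith [hSa, hSb]
  have hsum_nonneg : 0 ≤ (∑' n : ℕ, a (n + 2)) + (∑' n : ℕ, b (n + 2)) :=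
    add_nonneg (tsum_nonneg fun n => ha _) (tsum_nonneg fun n => hb _)
  have hQeq : (1 - alpha) / D - ((1 + k) - (-1:ℝ) ^ (u - v) * (k + alpha)) / D * b 1
      = (1 - eta 1 * b 1) / xi 2 := by
    rw [huvd, ← heta1, ← hxi2]
    field_simp
  -- norm estimates
  have hrle : r ≤ 1 := hz.le
  have hra : Summable (fun n : ℕ => a (n + 2) * r ^ (n + 2)) := by
    apply Summable.of_nonneg_of_le (fun n => mul_nonneg (ha _) (pow_nonneg hr0 _))
      (fun n => ?_) hA
    exact mul_le_of_le_one_right (ha _) (pow_le_one₀ hr0 hrle)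
  have hrb : Summable (fun n : ℕ => b (n + 1) * r ^ (n + 1)) := by
    apply Summable.of_nonneg_of_le (fun n => mul_nonneg (hb _) (pow_nonneg hr0 _))
      (fun n => ?_) hB1
    exact mul_le_of_le_one_right (hb _) (pow_le_one₀ hr0 hrle)
  have hrb2 : Summable (fun n : ℕ => b (n + 2) * r ^ (n + 2)) :=
    (summable_nat_add_iff (f := fun n : ℕ => b (n + 1) * r ^ (n + 1)) 1).mpr hrb
  have hnA : (fun n : ℕ => ‖(a (n + 2) : ℂ) * z ^ (n + 2)‖)
      = fun n : ℕ => a (n + 2) * r ^ (n + 2) := by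
    funext n
    rw [norm_mul, norm_pow, Complex.norm_real, Real.norm_eq_abs, _root_.abs_of_nonneg (ha _),
      ← hrdef]
  have hnB : (fun n : ℕ => ‖(b (n + 1) : ℂ) * ((starRingEnd ℂ) z) ^ (n + 1)‖)
      = fun n : ℕ => b (n + 1) * r ^ (n + 1) := by
    funext n
    rw [norm_mul, norm_pow, Complex.norm_real, Real.norm_eq_abs, _root_.abs_of_nonneg (hb _),
      RCLike.norm_conj, ← hrdef]
  have hnormA : ‖∑' n : ℕ, (a (n + 2) : ℂ) * z ^ (n + 2)‖
      ≤ ∑' n : ℕ, a (n + 2) * r ^ (n + 2) := by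
    have h := norm_tsum_le_tsum_norm (f := fun n : ℕ => (a (n + 2) : ℂ) * z ^ (n + 2))
      (by rw [hnA]; exact hra)
    rwa [hnA] at h
  have hnormB : ‖∑' n : ℕ, (b (n + 1) : ℂ) * ((starRingEnd ℂ) z) ^ (n + 1)‖
      ≤ ∑' n : ℕ, b (n + 1) * r ^ (n + 1) := by
    have h := norm_tsum_le_tsum_norm
      (f := fun n : ℕ => (b (n + 1) : ℂ) * ((starRingEnd ℂ) z) ^ (n + 1))
      (by rw [hnB]; exact hrb)
    rwa [hnB] at h
  have hbsplit : (∑' n : ℕ, b (n + 1) * r ^ (n + 1))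
      = b 1 * r ^ 1 + ∑' n : ℕ, b (n + 2) * r ^ (n + 2) := Summable.tsum_eq_zero_add hrb
  have hAr2 : (∑' n : ℕ, a (n + 2) * r ^ (n + 2)) ≤ r ^ 2 * ∑' n : ℕ, a (n + 2) := by
    rw [← tsum_mul_left]
    refine Summable.tsum_le_tsum (fun n => ?_) hra (hA.mul_left _)
    rw [mul_comm (r ^ 2)]
    exact mul_le_mul_of_nonneg_left (pow_le_pow_of_le_one hr0 hrle (by omega)) (ha _)
  have hBr2 : (∑' n : ℕ, b (n + 2) * r ^ (n + 2)) ≤ r ^ 2 * ∑' n : ℕ, b (n + 2) := by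
    rw [← tsum_mul_left]
    refine Summable.tsum_le_tsum (fun n => ?_) hrb2 (hB.mul_left _)
    rw [mul_comm (r ^ 2)]
    exact mul_le_mul_of_nonneg_left (pow_le_pow_of_le_one hr0 hrle (by omega)) (hb _)
  rw [hf z hz]
  have hcnorm : ‖(-1 : ℂ) ^ (u - 1)‖ = 1 := by simp
  have hnormf : ‖z - (∑' n : ℕ, (a (n + 2) : ℂ) * z ^ (n + 2)) +
      (-1 : ℂ) ^ (u - 1) * ∑' n : ℕ, (b (n + 1) : ℂ) * ((starRingEnd ℂ) z) ^ (n + 1)‖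
      ≤ r + (∑' n : ℕ, a (n + 2) * r ^ (n + 2)) + ∑' n : ℕ, b (n + 1) * r ^ (n + 1) := by
    calc ‖z - (∑' n : ℕ, (a (n + 2) : ℂ) * z ^ (n + 2)) +
        (-1 : ℂ) ^ (u - 1) * ∑' n : ℕ, (b (n + 1) : ℂ) * ((starRingEnd ℂ) z) ^ (n + 1)‖
        ≤ ‖z - (∑' n : ℕ, (a (n + 2) : ℂ) * z ^ (n + 2))‖ +
          ‖(-1 : ℂ) ^ (u - 1) * ∑' n : ℕ, (b (n + 1) : ℂ) * ((starRingEnd ℂ) z) ^ (n + 1)‖ :=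
        norm_add_le _ _
      _ ≤ (‖z‖ + ‖∑' n : ℕ, (a (n + 2) : ℂ) * z ^ (n + 2)‖) +
          ‖∑' n : ℕ, (b (n + 1) : ℂ) * ((starRingEnd ℂ) z) ^ (n + 1)‖ := by
        rw [norm_mul, hcnorm, one_mul]
        exact add_le_add_left (norm_sub_le _ _) _
      _ ≤ r + (∑' n : ℕ, a (n + 2) * r ^ (n + 2)) + ∑' n : ℕ, b (n + 1) * r ^ (n + 1) := by
        rw [← hrdef]
        exact add_le_add (add_le_add_right hnormA _) hnormB
  refine hnormf.trans ?_
  rw [hbsplit]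
  rw [hQeq]
  have hS2 : (∑' n : ℕ, a (n + 2) * r ^ (n + 2)) + (∑' n : ℕ, b (n + 2) * r ^ (n + 2))
      ≤ r ^ 2 * ((1 - eta 1 * b 1) / xi 2) := by
    have h5 : r ^ 2 * ((∑' n : ℕ, a (n + 2)) + (∑' n : ℕ, b (n + 2)))
        ≤ r ^ 2 * ((1 - eta 1 * b 1) / xi 2) := by
      apply mul_le_mul_of_nonneg_left _ (by positivity)
      rw [le_div_iff₀ hxi2pos]
      linarith [hkey]
    rw [mul_add] at h5
    linarith [hAr2, hBr2]
  rw [pow_one]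
  linarith [hS2]
end

section
/- (Distortion bound, lower estimate) Under the same hypotheses as the upper distortion bound for f_u ∈ k-UTH(u,v,α,λ), for |z| = r < 1: |f_u(z)| ≥ (1 − |b_1|)r − (σ − τ|b_1|) r^2, with σ and τ as defined. -/
open Complex

lemma aux_mono (c : ℝ) (hc : 1 ≤ c) (u v : ℕ) (huv : v ≤ u) (s t : ℝ)
    (hs : 1 ≤ s) (hst : s ≤ t) :
    s ^ v + (s ^ u - s ^ v) * c ≤ t ^ v + (t ^ u - t ^ v) * c := by
  have hs0 : (0:ℝ) ≤ s := by linarith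
  have h1 : s ^ v ≤ t ^ v := pow_le_pow_left₀ hs0 hst v
  have h2 : s ^ (u - v) ≤ t ^ (u - v) := pow_le_pow_left₀ hs0 hst _
  have h3 : (1:ℝ) ≤ s ^ (u - v) := one_le_pow₀ hs
  have h4 : (1:ℝ) ≤ s ^ v := one_le_pow₀ hs
  have htu : t ^ u = t ^ v * t ^ (u - v) := by
    rw [← pow_add, Nat.add_sub_cancel' huv]
  have hsu : s ^ u = s ^ v * s ^ (u - v) := by
    rw [← pow_add, Nat.add_sub_cancel' huv]
  have key : s ^ v * (s ^ (u - v) - 1) ≤ t ^ v * (t ^ (u - v) - 1) :=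
    mul_le_mul h1 (by linarith) (by linarith) (by linarith)
  nlinarith [key, h1, hc]

set_option maxHeartbeats 1000000 in
/-- lower distortion bound for f_u ∈ k-UTH(u,v,α,λ). -/
theorem kUTH_distortion_lower (lam k alpha : ℝ) (u v : ℕ)
    (hlam : 0 < lam) (hk : 0 ≤ k) (halpha0 : 0 ≤ alpha) (halpha1 : alpha < 1)
    (hu : 1 ≤ u) (huv : v < u)
    (hden : 0 < (1 + lam) ^ u * (1 + k) - (1 + lam) ^ v * (k + alpha))
    (a b : ℕ → ℝ) (ha : ∀ n, 0 ≤ a n) (hb : ∀ n, 0 ≤ b n)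
    (ha1 : a 1 = 1) (hb1 : b 1 < 1)
    (xi eta : ℕ → ℝ)
    (hxi : ∀ n : ℕ, xi n = (1 + ((n : ℝ) - 1) * lam) ^ v +
      ((1 + ((n : ℝ) - 1) * lam) ^ u - (1 + ((n : ℝ) - 1) * lam) ^ v) * (1 + k) / (1 - alpha))
    (heta : ∀ n : ℕ, eta n = (-1 : ℝ) ^ (u - v) * (1 + ((n : ℝ) - 1) * lam) ^ v +
      ((1 + ((n : ℝ) - 1) * lam) ^ u -
        (-1 : ℝ) ^ (u - v) * (1 + ((n : ℝ) - 1) * lam) ^ v) * (1 + k) / (1 - alpha))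
    (hsa : Summable (fun n : ℕ => xi (n + 2) * a (n + 2)))
    (hsb : Summable (fun n : ℕ => eta (n + 1) * b (n + 1)))
    (hcoef : xi 1 * a 1 + (∑' n : ℕ, xi (n + 2) * a (n + 2)) +
             (∑' n : ℕ, eta (n + 1) * b (n + 1)) ≤ 2)
    (f : ℂ → ℂ)
    (hf : ∀ z : ℂ, ‖z‖ < 1 →
      f z = z - (∑' n : ℕ, (a (n + 2) : ℂ) * z ^ (n + 2)) +
        (-1 : ℂ) ^ (u - 1) * ∑' n : ℕ, (b (n + 1) : ℂ) * ((starRingEnd ℂ) z) ^ (n + 1)) :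
    ∀ z : ℂ, ‖z‖ < 1 →
      (1 - b 1) * ‖z‖ -
        ((1 - alpha) / ((1 + lam) ^ u * (1 + k) - (1 + lam) ^ v * (k + alpha)) -
          ((1 + k) - (-1 : ℝ) ^ (u - v) * (k + alpha)) /
            ((1 + lam) ^ u * (1 + k) - (1 + lam) ^ v * (k + alpha)) * b 1) * ‖z‖ ^ 2 ≤ ‖f z‖ := by
  intro z hz
  have h1a : 0 < 1 - alpha := by linarith
  set r := ‖z‖ with hrdef
  have hr0 : 0 ≤ r := norm_nonneg z
  set D := (1 + lam) ^ u * (1 + k) - (1 + lam) ^ v * (k + alpha) with hD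
  set c := (1 + k) / (1 - alpha) with hcc
  have hc1 : 1 ≤ c := by
    rw [hcc, le_div_iff₀ h1a]; nlinarith
  set E := (-1 : ℝ) ^ (u - v) with hE
  have hE1 : E = 1 ∨ E = -1 := by
    rcases Nat.even_or_odd (u - v) with h | h
    · left; rw [hE]; exact h.neg_one_pow
    · right; rw [hE]; exact h.neg_one_pow
  have hEle : E ≤ 1 := by rcases hE1 with h | h <;> rw [h] <;> norm_num
  -- xi as a function of t
  have hxi' : ∀ n : ℕ, xi n = (1 + ((n : ℝ) - 1) * lam) ^ v +
      ((1 + ((n : ℝ) - 1) * lam) ^ u - (1 + ((n : ℝ) - 1) * lam) ^ v) * c := by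
    intro n; rw [hxi n, hcc]; ring
  have heta' : ∀ n : ℕ, eta n = E * (1 + ((n : ℝ) - 1) * lam) ^ v +
      ((1 + ((n : ℝ) - 1) * lam) ^ u - E * (1 + ((n : ℝ) - 1) * lam) ^ v) * c := by
    intro n; rw [heta n, hcc, hE]; ring
  have hxi1 : xi 1 = 1 := by rw [hxi' 1]; norm_num
  have hxi2 : xi 2 = D / (1 - alpha) := by
    rw [hxi' 2, hcc, hD]; push_cast; field_simp; ring
  have hxi2pos : 0 < xi 2 := by rw [hxi2]; positivity
  have heta1 : eta 1 = ((1 + k) - E * (k + alpha)) / (1 - alpha) := by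
    rw [heta' 1, hcc]; field_simp; ring
  -- monotonicity: xi 2 ≤ xi (n+2), xi 2 ≤ eta (n+2)
  have hbase : ∀ n : ℕ, 1 + lam ≤ 1 + ((n:ℝ) + 2 - 1) * lam := by
    intro n
    have : (1:ℝ) ≤ (n:ℝ) + 2 - 1 := by
      have : (0:ℝ) ≤ (n:ℝ) := Nat.cast_nonneg n
      linarith
    nlinarith
  have hxiLo : ∀ n : ℕ, xi 2 ≤ xi (n + 2) := by
    intro n
    rw [hxi' 2, hxi' (n + 2)]
    push_cast
    have := aux_mono c hc1 u v (le_of_lt huv) (1 + lam) (1 + ((n:ℝ) + 2 - 1) * lam)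
      (by linarith) (hbase n)
    norm_num at this ⊢
    convert this using 3 <;> ring
  have hetaLo : ∀ n : ℕ, xi 2 ≤ eta (n + 2) := by
    intro n
    refine (hxiLo n).trans ?_
    rw [hxi' (n + 2), heta' (n + 2)]
    have hn0 : (0:ℝ) ≤ (n:ℝ) := Nat.cast_nonneg n
    have ht1 : (1:ℝ) ≤ 1 + (((n + 2 : ℕ) : ℝ) - 1) * lam := by push_cast; nlinarith
    have htv : (0:ℝ) ≤ (1 + (((n + 2 : ℕ) : ℝ) - 1) * lam) ^ v := pow_nonneg (by linarith) v
    have key : 0 ≤ (1 - E) * (c - 1) * (1 + (((n + 2 : ℕ) : ℝ) - 1) * lam) ^ v :=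
      mul_nonneg (mul_nonneg (by linarith) (by linarith)) htv
    nlinarith [key]
  -- summability of plain coefficients
  have hsa' : Summable (fun n : ℕ => a (n + 2)) := by
    apply Summable.of_nonneg_of_le (fun n => ha _) (fun n => ?_) (hsa.div_const (xi 2))
    rw [le_div_iff₀ hxi2pos]
    calc a (n+2) * xi 2 = xi 2 * a (n+2) := by ring
      _ ≤ xi (n+2) * a (n+2) := mul_le_mul_of_nonneg_right (hxiLo n) (ha _)
  have hsb2 : Summable (fun n : ℕ => eta (n + 2) * b (n + 2)) := by
    have := (summable_nat_add_iff 1).2 hsb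
    exact this
  have hsb' : Summable (fun n : ℕ => b (n + 2)) := by
    apply Summable.of_nonneg_of_le (fun n => hb _) (fun n => ?_) (hsb2.div_const (xi 2))
    rw [le_div_iff₀ hxi2pos]
    calc b (n+2) * xi 2 = xi 2 * b (n+2) := by ring
      _ ≤ eta (n+2) * b (n+2) := mul_le_mul_of_nonneg_right (hetaLo n) (hb _)
  set Sa := ∑' n : ℕ, a (n + 2) with hSa
  set Sb := ∑' n : ℕ, b (n + 2) with hSb
  have hSa0 : 0 ≤ Sa := tsum_nonneg fun n => ha _
  have hSb0 : 0 ≤ Sb := tsum_nonneg fun n => hb _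
  -- coefficient bound
  have hsplit : ∑' n : ℕ, eta (n + 1) * b (n + 1)
      = eta 1 * b 1 + ∑' n : ℕ, eta (n + 2) * b (n + 2) := Summable.tsum_eq_zero_add hsb
  have hta : xi 2 * Sa ≤ ∑' n : ℕ, xi (n + 2) * a (n + 2) := by
    rw [hSa, ← tsum_mul_left]
    exact Summable.tsum_le_tsum (fun n => mul_le_mul_of_nonneg_right (hxiLo n) (ha _))
      (hsa'.mul_left _) hsa
  have htb : xi 2 * Sb ≤ ∑' n : ℕ, eta (n + 2) * b (n + 2) := by
    rw [hSb, ← tsum_mul_left]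
    exact Summable.tsum_le_tsum (fun n => mul_le_mul_of_nonneg_right (hetaLo n) (hb _))
      (hsb'.mul_left _) hsb2
  have hSab : xi 2 * (Sa + Sb) ≤ 1 - eta 1 * b 1 := by
    rw [hsplit, hxi1, ha1] at hcoef
    nlinarith [hta, htb]
  -- norm estimates
  set A := ∑' n : ℕ, (a (n + 2) : ℂ) * z ^ (n + 2) with hA
  set B := ∑' n : ℕ, (b (n + 1) : ℂ) * ((starRingEnd ℂ) z) ^ (n + 1) with hB
  have hrn : ∀ m : ℕ, r ^ (m + 2) ≤ r ^ 2 := by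
    intro m
    calc r ^ (m + 2) = r ^ m * r ^ 2 := by ring
      _ ≤ 1 * r ^ 2 := by
          apply mul_le_mul_of_nonneg_right _ (by positivity)
          exact pow_le_one₀ hr0 (le_of_lt hz)
      _ = r ^ 2 := one_mul _
  have hnormterm : ∀ n : ℕ, ‖(a (n + 2) : ℂ) * z ^ (n + 2)‖ = a (n + 2) * r ^ (n + 2) := by
    intro n
    rw [norm_mul, norm_pow, Complex.norm_real, Real.norm_eq_abs, _root_.abs_of_nonneg (ha _)]
  have hnormtermb : ∀ n : ℕ, ‖(b (n + 1) : ℂ) * ((starRingEnd ℂ) z) ^ (n + 1)‖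
      = b (n + 1) * r ^ (n + 1) := by
    intro n
    rw [norm_mul, norm_pow, Complex.norm_real, Real.norm_eq_abs, _root_.abs_of_nonneg (hb _)]
    simp [hrdef]
  have hsumA : Summable (fun n : ℕ => ‖(a (n + 2) : ℂ) * z ^ (n + 2)‖) := by
    apply Summable.of_nonneg_of_le (fun n => norm_nonneg _) (fun n => ?_) hsa'
    rw [hnormterm n]
    calc a (n+2) * r ^ (n+2) ≤ a (n+2) * 1 := by
          apply mul_le_mul_of_nonneg_left _ (ha _)
          exact pow_le_one₀ hr0 (le_of_lt hz)
      _ = a (n+2) := mul_one _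
  have hsumB : Summable (fun n : ℕ => ‖(b (n + 1) : ℂ) * ((starRingEnd ℂ) z) ^ (n + 1)‖) := by
    have hsb'' : Summable (fun n : ℕ => b (n + 1)) := by
      rw [← summable_nat_add_iff 1]
      exact hsb'
    apply Summable.of_nonneg_of_le (fun n => norm_nonneg _) (fun n => ?_) hsb''
    rw [hnormtermb n]
    calc b (n+1) * r ^ (n+1) ≤ b (n+1) * 1 := by
          apply mul_le_mul_of_nonneg_left _ (hb _)
          exact pow_le_one₀ hr0 (le_of_lt hz)
      _ = b (n+1) := mul_one _
  have hAbound : ‖A‖ ≤ Sa * r ^ 2 := by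
    calc ‖A‖ ≤ ∑' n : ℕ, ‖(a (n + 2) : ℂ) * z ^ (n + 2)‖ := norm_tsum_le_tsum_norm hsumA
      _ ≤ ∑' n : ℕ, a (n + 2) * r ^ 2 := by
          apply Summable.tsum_le_tsum _ hsumA (hsa'.mul_right _)
          intro n
          rw [hnormterm n]
          exact mul_le_mul_of_nonneg_left (hrn n) (ha _)
      _ = Sa * r ^ 2 := tsum_mul_right
  have hBbound : ‖B‖ ≤ b 1 * r + Sb * r ^ 2 := by
    calc ‖B‖ ≤ ∑' n : ℕ, ‖(b (n + 1) : ℂ) * ((starRingEnd ℂ) z) ^ (n + 1)‖ :=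
          norm_tsum_le_tsum_norm hsumB
      _ = b 1 * r ^ 1 + ∑' n : ℕ, ‖(b (n + 2) : ℂ) * ((starRingEnd ℂ) z) ^ (n + 2)‖ := by
          rw [Summable.tsum_eq_zero_add hsumB, hnormtermb 0]
      _ ≤ b 1 * r + Sb * r ^ 2 := by
          have h2 : ∑' n : ℕ, ‖(b (n + 2) : ℂ) * ((starRingEnd ℂ) z) ^ (n + 2)‖
              ≤ Sb * r ^ 2 := by
            have hsumB2 : Summable (fun n : ℕ =>
                ‖(b (n + 2) : ℂ) * ((starRingEnd ℂ) z) ^ (n + 2)‖) :=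
              (summable_nat_add_iff 1).2 hsumB
            calc ∑' n : ℕ, ‖(b (n + 2) : ℂ) * ((starRingEnd ℂ) z) ^ (n + 2)‖
                ≤ ∑' n : ℕ, b (n + 2) * r ^ 2 := by
                  apply Summable.tsum_le_tsum _ hsumB2 (hsb'.mul_right _)
                  intro n
                  rw [show ‖(b (n + 2) : ℂ) * ((starRingEnd ℂ) z) ^ (n + 2)‖
                      = b (n + 2) * r ^ (n + 2) from hnormtermb (n + 1)]
                  exact mul_le_mul_of_nonneg_left (hrn n) (hb _)
              _ = Sb * r ^ 2 := tsum_mul_right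
          have : r ^ 1 = r := pow_one r
          rw [this]
          linarith
  -- reverse triangle inequality
  have hlow : r - ‖A‖ - ‖B‖ ≤ ‖f z‖ := by
    rw [hf z hz]
    have hnE : ‖(-1 : ℂ) ^ (u - 1) * B‖ = ‖B‖ := by
      rw [norm_mul, norm_pow, norm_neg, norm_one, one_pow, one_mul]
    have h1 : ‖z‖ ≤ ‖z - A + (-1 : ℂ) ^ (u - 1) * B‖ + ‖A - (-1 : ℂ) ^ (u - 1) * B‖ := by
      calc ‖z‖ = ‖(z - A + (-1 : ℂ) ^ (u - 1) * B) + (A - (-1 : ℂ) ^ (u - 1) * B)‖ := by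
            ring_nf
        _ ≤ _ := norm_add_le _ _
    have h2 : ‖A - (-1 : ℂ) ^ (u - 1) * B‖ ≤ ‖A‖ + ‖B‖ := by
      calc ‖A - (-1 : ℂ) ^ (u - 1) * B‖ ≤ ‖A‖ + ‖(-1 : ℂ) ^ (u - 1) * B‖ := norm_sub_le _ _
        _ = ‖A‖ + ‖B‖ := by rw [hnE]
    linarith
  -- final arithmetic
  have hfin : Sa + Sb ≤ (1 - alpha) / D - ((1 + k) - E * (k + alpha)) / D * b 1 := by
    have hxi2' : xi 2 = D / (1 - alpha) := hxi2
    have h1 : (1 - alpha) / D - ((1 + k) - E * (k + alpha)) / D * b 1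
        = (1 - eta 1 * b 1) / xi 2 := by
      rw [heta1, hxi2']
      field_simp
    rw [h1, le_div_iff₀ hxi2pos]
    nlinarith [hSab]
  have hr2 : (0:ℝ) ≤ r ^ 2 := by positivity
  have : (1 - b 1) * r - ((1 - alpha) / D - ((1 + k) - E * (k + alpha)) / D * b 1) * r ^ 2
      ≤ r - ‖A‖ - ‖B‖ := by
    nlinarith [hAbound, hBbound, hfin, hr2]
  linarith
end

section
/- Let f = h + conj(g) with h(z) = z + ∑_{n≥2} a_n z^n, g(z) = ∑_{n≥1} b_n z^n, |b_1| < 1, 0 ≤ α < 1. If ∑_{n≥2} (n−α)/(1−α) |a_n| + ∑_{n≥1} (n+α)/(1−α) |b_n| ≤ 1, then f is univalent and sense-preserving in U and satisfies Re{D^1 f(z)/D^0 f(z)} ≥ α (the case λ = 1), i.e., f is harmonic starlike of order α. -/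
open Complex

lemma norm_add_lower (x T : ℂ) : ‖x‖ - ‖T‖ ≤ ‖x + T‖ := by
  simpa using norm_sub_norm_le x (-T)

lemma re_div_nonneg_of_norm {w v : ℂ} (hv : v ≠ 0) (h : ‖w - v‖ ≤ ‖w + v‖) :
    0 ≤ (w / v).re := by
  have hns : 0 < Complex.normSq v := Complex.normSq_pos.mpr hv
  have h2 : Complex.normSq (w - v) ≤ Complex.normSq (w + v) := by
    have h3 := mul_self_le_mul_self (norm_nonneg (w - v)) h
    rw [← Complex.sq_norm, ← Complex.sq_norm, pow_two, pow_two]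
    simpa using h3
  have key : 0 ≤ w.re * v.re + w.im * v.im := by
    simp only [Complex.normSq_apply, Complex.add_re, Complex.add_im, Complex.sub_re,
      Complex.sub_im] at h2
    nlinarith
  rw [Complex.div_re, ← add_div]
  exact div_nonneg key hns.le

lemma alpha_le_re_div {u v : ℂ} (α : ℝ) (hv : v ≠ 0)
    (h : ‖u - (α : ℂ) * v - v‖ ≤ ‖u - (α : ℂ) * v + v‖) : α ≤ (u / v).re := by
  have h0 : 0 ≤ ((u - (α : ℂ) * v) / v).re := re_div_nonneg_of_norm hv h
  have he : (u - (α : ℂ) * v) / v = u / v - (α : ℂ) := by field_simp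
  rw [he] at h0
  simp only [Complex.sub_re, Complex.ofReal_re] at h0
  linarith

lemma norm_pow_sub_pow' {z₁ z₂ : ℂ} {ρ : ℝ} (h₁ : ‖z₁‖ ≤ ρ) (h₂ : ‖z₂‖ ≤ ρ) (n : ℕ) :
    ‖z₁ ^ n - z₂ ^ n‖ ≤ n * ρ ^ (n - 1) * ‖z₁ - z₂‖ := by
  have hρ : 0 ≤ ρ := le_trans (norm_nonneg _) h₁
  rw [← geom_sum₂_mul z₁ z₂ n, norm_mul]
  have hb : ‖∑ i ∈ Finset.range n, z₁ ^ i * z₂ ^ (n - 1 - i)‖ ≤ n * ρ ^ (n - 1) := by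
    calc ‖∑ i ∈ Finset.range n, z₁ ^ i * z₂ ^ (n - 1 - i)‖
        ≤ ∑ i ∈ Finset.range n, ‖z₁ ^ i * z₂ ^ (n - 1 - i)‖ := norm_sum_le _ _
      _ ≤ ∑ i ∈ Finset.range n, ρ ^ (n - 1) := by
          refine Finset.sum_le_sum fun i hi => ?_
          rw [norm_mul, norm_pow, norm_pow]
          have hi' : i < n := Finset.mem_range.mp hi
          calc ‖z₁‖ ^ i * ‖z₂‖ ^ (n - 1 - i) ≤ ρ ^ i * ρ ^ (n - 1 - i) :=
                mul_le_mul (pow_le_pow_left₀ (norm_nonneg _) h₁ _)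
                  (pow_le_pow_left₀ (norm_nonneg _) h₂ _) (by positivity) (by positivity)
            _ = ρ ^ (n - 1) := by rw [← pow_add]; congr 1; omega
      _ = n * ρ ^ (n - 1) := by simp [Finset.sum_const, nsmul_eq_mul]
  exact mul_le_mul_of_nonneg_right hb (norm_nonneg _)

lemma norm_tsum_le_mul_pow (c : ℕ → ℂ) (w : ℕ → ℝ) (e : ℕ → ℕ) {z : ℂ} {r : ℝ} (m : ℕ)
    (hr1 : r ≤ 1) (hz : ‖z‖ ≤ r) (he : ∀ n, m ≤ e n)
    (hw : ∀ n, ‖c n‖ ≤ w n) (hsum : Summable w) :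
    ‖∑' n, c n * z ^ e n‖ ≤ (∑' n, w n) * r ^ m := by
  have hr0 : 0 ≤ r := le_trans (norm_nonneg _) hz
  have hwn : ∀ n, 0 ≤ w n := fun n => le_trans (norm_nonneg _) (hw n)
  have hb : ∀ n, ‖c n * z ^ e n‖ ≤ w n * r ^ m := fun n => by
    rw [norm_mul, norm_pow]
    have h1 : ‖z‖ ^ e n ≤ r ^ e n := pow_le_pow_left₀ (norm_nonneg z) hz _
    have h2 : r ^ e n ≤ r ^ m := pow_le_pow_of_le_one hr0 hr1 (he n)
    exact mul_le_mul (hw n) (le_trans h1 h2) (by positivity) (hwn n)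
  calc ‖∑' n, c n * z ^ e n‖ ≤ ∑' n, w n * r ^ m :=
        tsum_of_norm_bounded (hsum.mul_right _).hasSum hb
    _ = (∑' n, w n) * r ^ m := tsum_mul_right

lemma summable_cz (w : ℕ → ℝ) (c : ℕ → ℂ) (e : ℕ → ℕ) {z : ℂ} (hz : ‖z‖ ≤ 1)
    (hw : ∀ n, ‖c n‖ ≤ w n) (hsum : Summable w) : Summable fun n => c n * z ^ e n := by
  refine hsum.of_norm_bounded fun n => ?_
  rw [norm_mul, norm_pow]
  calc ‖c n‖ * ‖z‖ ^ e n ≤ w n * 1 :=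
        mul_le_mul (hw n) (pow_le_one₀ (norm_nonneg z) hz) (by positivity)
          (le_trans (norm_nonneg _) (hw n))
    _ = w n := mul_one _

lemma tsum_combine (c : ℕ → ℂ) (t : ℂ) (g : ℕ → ℂ) (e : ℕ → ℕ) (z : ℂ)
    (h1 : Summable fun n => c n * g n * z ^ e n) (h2 : Summable fun n => g n * z ^ e n) :
    ∑' n, (c n - t) * g n * z ^ e n =
      (∑' n, c n * g n * z ^ e n) - t * ∑' n, g n * z ^ e n := by
  rw [← tsum_mul_left, ← Summable.tsum_sub h1 (h2.mul_left t)]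
  congr 1; funext n; ring

set_option maxHeartbeats 2000000 in
/-- Jahangiri's starlikeness criterion; case k=0, u=1, v=0, λ=1:
if `∑_{n≥2} (n−α)/(1−α)|a_n| + ∑_{n≥1} (n+α)/(1−α)|b_n| ≤ 1`, then
`f = h + conj g` is univalent, sense-preserving, and `Re{D¹f(z)/f(z)} ≥ α` on `U`,
where `D¹f(z) = z h'(z) − conj(z g'(z))`. -/
theorem jahangiri_starlike (alpha : ℝ) (halpha0 : 0 ≤ alpha) (halpha1 : alpha < 1)
    (a b : ℕ → ℂ) (hb1 : ‖b 1‖ < 1)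
    (hsa : Summable (fun n : ℕ => (((n : ℝ) + 2 - alpha) / (1 - alpha)) * ‖a (n + 2)‖))
    (hsb : Summable (fun n : ℕ => (((n : ℝ) + 1 + alpha) / (1 - alpha)) * ‖b (n + 1)‖))
    (hcoef : (∑' n : ℕ, (((n : ℝ) + 2 - alpha) / (1 - alpha)) * ‖a (n + 2)‖) +
             (∑' n : ℕ, (((n : ℝ) + 1 + alpha) / (1 - alpha)) * ‖b (n + 1)‖) ≤ 1)
    (f : ℂ → ℂ)
    (hf : ∀ z : ℂ, ‖z‖ < 1 →
      f z = (z + ∑' n : ℕ, a (n + 2) * z ^ (n + 2)) +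
            (starRingEnd ℂ) (∑' n : ℕ, b (n + 1) * z ^ (n + 1))) :
    (∀ z₁ z₂ : ℂ, ‖z₁‖ < 1 → ‖z₂‖ < 1 → z₁ ≠ z₂ → f z₁ ≠ f z₂) ∧
    (∀ z : ℂ, ‖z‖ < 1 →
      ‖∑' n : ℕ, ((n + 1 : ℕ) : ℂ) * b (n + 1) * z ^ n‖ ≤
      ‖1 + ∑' n : ℕ, ((n + 2 : ℕ) : ℂ) * a (n + 2) * z ^ (n + 1)‖) ∧
    (∀ z : ℂ, ‖z‖ < 1 → z ≠ 0 →
      alpha ≤ (((z + ∑' n : ℕ, ((n + 2 : ℕ) : ℂ) * a (n + 2) * z ^ (n + 2)) -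
          (starRingEnd ℂ) (∑' n : ℕ, ((n + 1 : ℕ) : ℂ) * b (n + 1) * z ^ (n + 1))) /
          f z).re) := by
  have h1α : 0 < 1 - alpha := by linarith
  -- canonical (weight-free) summabilities
  have hsa2 : Summable (fun n : ℕ => ((n : ℝ) + 2 - alpha) * ‖a (n + 2)‖) := by
    refine (hsa.mul_left (1 - alpha)).congr fun n => ?_
    field_simp
  have hsb2 : Summable (fun n : ℕ => ((n : ℝ) + 1 + alpha) * ‖b (n + 1)‖) := by
    refine (hsb.mul_left (1 - alpha)).congr fun n => ?_
    field_simp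
  have hsP : Summable (fun n : ℕ => ((n : ℝ) + 2) * ‖a (n + 2)‖) :=
    hsa.of_nonneg_of_le (fun n => by positivity)
      (fun n => by
        have hb0 : (0:ℝ) ≤ ‖a (n + 2)‖ := norm_nonneg _
        rw [div_mul_eq_mul_div, le_div_iff₀ h1α]
        nlinarith [Nat.cast_nonneg (α := ℝ) n, mul_nonneg (Nat.cast_nonneg (α := ℝ) n) hb0])
  have hsnA : Summable (fun n : ℕ => ‖a (n + 2)‖) :=
    hsP.of_nonneg_of_le (fun n => norm_nonneg _)
      (fun n => by
        nlinarith [norm_nonneg (a (n + 2)), Nat.cast_nonneg (α := ℝ) n,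
          mul_nonneg (Nat.cast_nonneg (α := ℝ) n) (norm_nonneg (a (n + 2)))])
  have hsQ : Summable (fun n : ℕ => ((n : ℝ) + 1) * ‖b (n + 1)‖) :=
    hsb.of_nonneg_of_le (fun n => by positivity)
      (fun n => by
        have hb0 : (0:ℝ) ≤ ‖b (n + 1)‖ := norm_nonneg _
        rw [div_mul_eq_mul_div, le_div_iff₀ h1α]
        nlinarith [Nat.cast_nonneg (α := ℝ) n, mul_nonneg (Nat.cast_nonneg (α := ℝ) n) hb0])
  have hsnB : Summable (fun n : ℕ => ‖b (n + 1)‖) :=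
    hsQ.of_nonneg_of_le (fun n => norm_nonneg _)
      (fun n => by
        nlinarith [norm_nonneg (b (n + 1)), Nat.cast_nonneg (α := ℝ) n,
          mul_nonneg (Nat.cast_nonneg (α := ℝ) n) (norm_nonneg (b (n + 1)))])
  have hsTa1 : Summable (fun n : ℕ => ((n : ℝ) + 1 - alpha) * ‖a (n + 2)‖) :=
    hsP.of_nonneg_of_le
      (fun n => mul_nonneg (by nlinarith [Nat.cast_nonneg (α := ℝ) n]) (norm_nonneg _))
      (fun n => by nlinarith [norm_nonneg (a (n + 2))])
  have hsTb2 : Summable (fun n : ℕ => ((n : ℝ) + alpha) * ‖b (n + 1)‖) :=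
    hsQ.of_nonneg_of_le
      (fun n => mul_nonneg (by positivity) (norm_nonneg _))
      (fun n => by nlinarith [norm_nonneg (b (n + 1))])
  have hsbtail : Summable (fun n : ℕ =>
      (((n : ℝ) + 2 + alpha) / (1 - alpha)) * ‖b (n + 2)‖) := by
    refine ((summable_nat_add_iff 1).mpr hsb).congr fun n => ?_
    push_cast
    ring_nf
  have hsQ' : Summable (fun n : ℕ => ((n : ℝ) + 2) * ‖b (n + 2)‖) :=
    hsbtail.of_nonneg_of_le (fun n => by positivity)
      (fun n => by
        have hb0 : (0:ℝ) ≤ ‖b (n + 2)‖ := norm_nonneg _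
        rw [div_mul_eq_mul_div, le_div_iff₀ h1α]
        nlinarith [Nat.cast_nonneg (α := ℝ) n, mul_nonneg (Nat.cast_nonneg (α := ℝ) n) hb0])
  have hsnB2 : Summable (fun n : ℕ => ‖b (n + 2)‖) :=
    hsQ'.of_nonneg_of_le (fun n => norm_nonneg _)
      (fun n => by
        nlinarith [norm_nonneg (b (n + 2)), Nat.cast_nonneg (α := ℝ) n,
          mul_nonneg (Nat.cast_nonneg (α := ℝ) n) (norm_nonneg (b (n + 2)))])
  -- abbreviations for the real sums
  set Sa : ℝ := ∑' n : ℕ, (((n : ℝ) + 2 - alpha) / (1 - alpha)) * ‖a (n + 2)‖ with hSa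
  set Sb : ℝ := ∑' n : ℕ, (((n : ℝ) + 1 + alpha) / (1 - alpha)) * ‖b (n + 1)‖ with hSb
  set P : ℝ := ∑' n : ℕ, ((n : ℝ) + 2) * ‖a (n + 2)‖ with hP
  set nA : ℝ := ∑' n : ℕ, ‖a (n + 2)‖ with hnA
  set Q : ℝ := ∑' n : ℕ, ((n : ℝ) + 1) * ‖b (n + 1)‖ with hQ
  set nB : ℝ := ∑' n : ℕ, ‖b (n + 1)‖ with hnB
  set Q' : ℝ := ∑' n : ℕ, ((n : ℝ) + 2) * ‖b (n + 2)‖ with hQ'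
  set nB2 : ℝ := ∑' n : ℕ, ‖b (n + 2)‖ with hnB2
  set Ta1 : ℝ := ∑' n : ℕ, ((n : ℝ) + 1 - alpha) * ‖a (n + 2)‖ with hTa1
  set Tb2 : ℝ := ∑' n : ℕ, ((n : ℝ) + alpha) * ‖b (n + 1)‖ with hTb2
  have hPnn : 0 ≤ P := tsum_nonneg fun n => by positivity
  have hnAnn : 0 ≤ nA := tsum_nonneg fun n => by positivity
  have hQnn : 0 ≤ Q := tsum_nonneg fun n => by positivity
  have hnBnn : 0 ≤ nB := tsum_nonneg fun n => by positivity
  have hQ'nn : 0 ≤ Q' := tsum_nonneg fun n => by positivity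
  have hnB2nn : 0 ≤ nB2 := tsum_nonneg fun n => by positivity
  -- splitting Sb at n = 0
  have hSbsplit : Sb = ((1 + alpha) / (1 - alpha)) * ‖b 1‖ +
      ∑' n : ℕ, (((n : ℝ) + 2 + alpha) / (1 - alpha)) * ‖b (n + 2)‖ := by
    rw [hSb, Summable.tsum_eq_zero_add hsb]
    congr 1
    · norm_num
    · exact tsum_congr fun n => by push_cast; ring_nf
  have hbt_le : ∀ (w : ℕ → ℝ), (∀ n, 0 ≤ w n) →
      (∀ n, w n * (1 - alpha) ≤ ((n : ℝ) + 2 + alpha) * ‖b (n + 2)‖) → Summable w →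
      (∑' n, w n) ≤ ∑' n : ℕ, (((n : ℝ) + 2 + alpha) / (1 - alpha)) * ‖b (n + 2)‖ := by
    intro w h0 hle hs
    refine Summable.tsum_le_tsum (fun n => ?_) hs hsbtail
    rw [div_mul_eq_mul_div, le_div_iff₀ h1α]
    exact hle n
  -- key inequality 1 : P + ‖b 1‖ + Q' ≤ 1
  have key1 : P + ‖b 1‖ + Q' ≤ 1 := by
    have h1 : P ≤ Sa := by
      refine Summable.tsum_le_tsum (fun n => ?_) hsP hsa
      have hb0 : (0:ℝ) ≤ ‖a (n + 2)‖ := norm_nonneg _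
      rw [div_mul_eq_mul_div, le_div_iff₀ h1α]
      nlinarith [Nat.cast_nonneg (α := ℝ) n, mul_nonneg (Nat.cast_nonneg (α := ℝ) n) hb0]
    have h2 : Q' ≤ ∑' n : ℕ, (((n : ℝ) + 2 + alpha) / (1 - alpha)) * ‖b (n + 2)‖ := by
      refine hbt_le _ (fun n => by positivity) (fun n => ?_) hsQ'
      have hb0 : (0:ℝ) ≤ ‖b (n + 2)‖ := norm_nonneg _
      nlinarith [Nat.cast_nonneg (α := ℝ) n, mul_nonneg (Nat.cast_nonneg (α := ℝ) n) hb0]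
    have h3 : ‖b 1‖ ≤ ((1 + alpha) / (1 - alpha)) * ‖b 1‖ := by
      have hb0 : (0:ℝ) ≤ ‖b 1‖ := norm_nonneg _
      rw [div_mul_eq_mul_div, le_div_iff₀ h1α]
      nlinarith
    rw [hSbsplit] at hcoef
    linarith
  -- key inequality 2 : nA + ‖b 1‖ + nB2 ≤ 1
  have key2 : nA + ‖b 1‖ + nB2 ≤ 1 := by
    have h1 : nA ≤ Sa := by
      refine Summable.tsum_le_tsum (fun n => ?_) hsnA hsa
      have hb0 : (0:ℝ) ≤ ‖a (n + 2)‖ := norm_nonneg _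
      rw [div_mul_eq_mul_div, le_div_iff₀ h1α]
      nlinarith [Nat.cast_nonneg (α := ℝ) n, mul_nonneg (Nat.cast_nonneg (α := ℝ) n) hb0]
    have h2 : nB2 ≤ ∑' n : ℕ, (((n : ℝ) + 2 + alpha) / (1 - alpha)) * ‖b (n + 2)‖ := by
      refine hbt_le _ (fun n => norm_nonneg _) (fun n => ?_) hsnB2
      have hb0 : (0:ℝ) ≤ ‖b (n + 2)‖ := norm_nonneg _
      nlinarith [Nat.cast_nonneg (α := ℝ) n, mul_nonneg (Nat.cast_nonneg (α := ℝ) n) hb0]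
    have h3 : ‖b 1‖ ≤ ((1 + alpha) / (1 - alpha)) * ‖b 1‖ := by
      have hb0 : (0:ℝ) ≤ ‖b 1‖ := norm_nonneg _
      rw [div_mul_eq_mul_div, le_div_iff₀ h1α]
      nlinarith
    rw [hSbsplit] at hcoef
    linarith
  -- key inequality for starlikeness
  have keyStar : Ta1 + P + (1 - alpha) * nA + (Tb2 + Q + (1 + alpha) * nB) ≤
      2 * (1 - alpha) := by
    have ha : 2 * (1 - alpha) * Sa = Ta1 + (P + (1 - alpha) * nA) := by
      rw [hSa, ← tsum_mul_left, hTa1, hP, hnA, ← tsum_mul_left,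
        ← Summable.tsum_add hsP (hsnA.mul_left _), ← Summable.tsum_add hsTa1 (hsP.add (hsnA.mul_left _))]
      refine tsum_congr fun n => ?_
      field_simp
      ring
    have hbb : 2 * (1 - alpha) * Sb = Tb2 + (Q + (1 + alpha) * nB) := by
      rw [hSb, ← tsum_mul_left, hTb2, hQ, hnB, ← tsum_mul_left,
        ← Summable.tsum_add hsQ (hsnB.mul_left _), ← Summable.tsum_add hsTb2 (hsQ.add (hsnB.mul_left _))]
      refine tsum_congr fun n => ?_
      field_simp
      ring
    nlinarith
  refine ⟨?_, ?_, ?_⟩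
  · -- univalence
    intro z₁ z₂ hz₁ hz₂ hne heq
    set ρ : ℝ := max ‖z₁‖ ‖z₂‖ with hρ
    have hρ1 : ρ < 1 := max_lt hz₁ hz₂
    have hρ0 : 0 ≤ ρ := le_trans (norm_nonneg _) (le_max_left _ _)
    have hd : 0 < ‖z₁ - z₂‖ := norm_pos_iff.mpr (sub_ne_zero.mpr hne)
    have hA1 : Summable (fun n : ℕ => a (n + 2) * z₁ ^ (n + 2)) :=
      summable_cz (fun n => ‖a (n + 2)‖) _ (fun n => n + 2) hz₁.le (fun n => le_rfl) hsnA
    have hA2 : Summable (fun n : ℕ => a (n + 2) * z₂ ^ (n + 2)) :=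
      summable_cz (fun n => ‖a (n + 2)‖) _ (fun n => n + 2) hz₂.le (fun n => le_rfl) hsnA
    have hB1 : Summable (fun n : ℕ => b (n + 1) * z₁ ^ (n + 1)) :=
      summable_cz (fun n => ‖b (n + 1)‖) _ (fun n => n + 1) hz₁.le (fun n => le_rfl) hsnB
    have hB2 : Summable (fun n : ℕ => b (n + 1) * z₂ ^ (n + 1)) :=
      summable_cz (fun n => ‖b (n + 1)‖) _ (fun n => n + 1) hz₂.le (fun n => le_rfl) hsnB
    -- difference formula
    have hdiff : (0 : ℂ) = (z₁ - z₂) + ((∑' n : ℕ, a (n + 2) * (z₁ ^ (n + 2) - z₂ ^ (n + 2))) +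
        (starRingEnd ℂ) (∑' n : ℕ, b (n + 1) * (z₁ ^ (n + 1) - z₂ ^ (n + 1)))) := by
      have e1 : (∑' n : ℕ, a (n + 2) * (z₁ ^ (n + 2) - z₂ ^ (n + 2))) =
          (∑' n : ℕ, a (n + 2) * z₁ ^ (n + 2)) - ∑' n : ℕ, a (n + 2) * z₂ ^ (n + 2) := by
        rw [← Summable.tsum_sub hA1 hA2]
        exact tsum_congr fun n => by ring
      have e2 : (∑' n : ℕ, b (n + 1) * (z₁ ^ (n + 1) - z₂ ^ (n + 1))) =
          (∑' n : ℕ, b (n + 1) * z₁ ^ (n + 1)) - ∑' n : ℕ, b (n + 1) * z₂ ^ (n + 1) := by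
        rw [← Summable.tsum_sub hB1 hB2]
        exact tsum_congr fun n => by ring
      rw [e1, e2, map_sub]
      have := hf z₁ hz₁
      have := hf z₂ hz₂
      have h0 : f z₁ - f z₂ = 0 := by rw [heq, sub_self]
      rw [hf z₁ hz₁, hf z₂ hz₂] at h0
      linear_combination -h0
    -- bounds
    have hΔA : ‖∑' n : ℕ, a (n + 2) * (z₁ ^ (n + 2) - z₂ ^ (n + 2))‖ ≤
        P * (ρ * ‖z₁ - z₂‖) := by
      have hb : ∀ n : ℕ, ‖a (n + 2) * (z₁ ^ (n + 2) - z₂ ^ (n + 2))‖ ≤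
          ((n : ℝ) + 2) * ‖a (n + 2)‖ * (ρ * ‖z₁ - z₂‖) := by
        intro n
        rw [norm_mul]
        have h1 : ‖z₁ ^ (n + 2) - z₂ ^ (n + 2)‖ ≤ ((n : ℝ) + 2) * ρ ^ (n + 1) * ‖z₁ - z₂‖ := by
          have := norm_pow_sub_pow' (le_max_left ‖z₁‖ ‖z₂‖) (le_max_right ‖z₁‖ ‖z₂‖) (n + 2)
          push_cast at this
          convert this using 3 <;> omega
        have h2 : ρ ^ (n + 1) ≤ ρ := by
          calc ρ ^ (n + 1) ≤ ρ ^ 1 := pow_le_pow_of_le_one hρ0 hρ1.le (by omega)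
            _ = ρ := pow_one ρ
        calc ‖a (n + 2)‖ * ‖z₁ ^ (n + 2) - z₂ ^ (n + 2)‖ ≤
            ‖a (n + 2)‖ * (((n : ℝ) + 2) * ρ ^ (n + 1) * ‖z₁ - z₂‖) :=
              mul_le_mul_of_nonneg_left h1 (norm_nonneg _)
          _ = ((n : ℝ) + 2) * ‖a (n + 2)‖ * (ρ ^ (n + 1) * ‖z₁ - z₂‖) := by ring
          _ ≤ ((n : ℝ) + 2) * ‖a (n + 2)‖ * (ρ * ‖z₁ - z₂‖) := by
              refine mul_le_mul_of_nonneg_left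
                (mul_le_mul_of_nonneg_right h2 hd.le) (by positivity)
      calc ‖∑' n : ℕ, a (n + 2) * (z₁ ^ (n + 2) - z₂ ^ (n + 2))‖ ≤
          ∑' n : ℕ, ((n : ℝ) + 2) * ‖a (n + 2)‖ * (ρ * ‖z₁ - z₂‖) :=
            tsum_of_norm_bounded (hsP.mul_right _).hasSum hb
        _ = P * (ρ * ‖z₁ - z₂‖) := tsum_mul_right
    have hBsum : Summable (fun n : ℕ => b (n + 1) * (z₁ ^ (n + 1) - z₂ ^ (n + 1))) := by
      refine Summable.of_norm_bounded (hsQ.mul_right ‖z₁ - z₂‖) fun n => ?_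
      rw [norm_mul]
      have h1 : ‖z₁ ^ (n + 1) - z₂ ^ (n + 1)‖ ≤ ((n : ℝ) + 1) * ‖z₁ - z₂‖ := by
        have h := norm_pow_sub_pow' (ρ := 1) hz₁.le hz₂.le (n + 1)
        push_cast at h
        simpa using h
      calc ‖b (n + 1)‖ * ‖z₁ ^ (n + 1) - z₂ ^ (n + 1)‖ ≤
            ‖b (n + 1)‖ * (((n : ℝ) + 1) * ‖z₁ - z₂‖) :=
            mul_le_mul_of_nonneg_left h1 (norm_nonneg _)
        _ = ((n : ℝ) + 1) * ‖b (n + 1)‖ * ‖z₁ - z₂‖ := by ring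
    have hΔBsplit : (∑' n : ℕ, b (n + 1) * (z₁ ^ (n + 1) - z₂ ^ (n + 1))) =
        b 1 * (z₁ - z₂) + ∑' n : ℕ, b (n + 2) * (z₁ ^ (n + 2) - z₂ ^ (n + 2)) := by
      rw [Summable.tsum_eq_zero_add hBsum]
      congr 1
      · norm_num
    have hΔB2 : ‖∑' n : ℕ, b (n + 2) * (z₁ ^ (n + 2) - z₂ ^ (n + 2))‖ ≤
        Q' * (ρ * ‖z₁ - z₂‖) := by
      have hb : ∀ n : ℕ, ‖b (n + 2) * (z₁ ^ (n + 2) - z₂ ^ (n + 2))‖ ≤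
          ((n : ℝ) + 2) * ‖b (n + 2)‖ * (ρ * ‖z₁ - z₂‖) := by
        intro n
        rw [norm_mul]
        have h1 : ‖z₁ ^ (n + 2) - z₂ ^ (n + 2)‖ ≤ ((n : ℝ) + 2) * ρ ^ (n + 1) * ‖z₁ - z₂‖ := by
          have := norm_pow_sub_pow' (le_max_left ‖z₁‖ ‖z₂‖) (le_max_right ‖z₁‖ ‖z₂‖) (n + 2)
          push_cast at this
          convert this using 3 <;> omega
        have h2 : ρ ^ (n + 1) ≤ ρ := by
          calc ρ ^ (n + 1) ≤ ρ ^ 1 := pow_le_pow_of_le_one hρ0 hρ1.le (by omega)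
            _ = ρ := pow_one ρ
        calc ‖b (n + 2)‖ * ‖z₁ ^ (n + 2) - z₂ ^ (n + 2)‖ ≤
            ‖b (n + 2)‖ * (((n : ℝ) + 2) * ρ ^ (n + 1) * ‖z₁ - z₂‖) :=
              mul_le_mul_of_nonneg_left h1 (norm_nonneg _)
          _ = ((n : ℝ) + 2) * ‖b (n + 2)‖ * (ρ ^ (n + 1) * ‖z₁ - z₂‖) := by ring
          _ ≤ ((n : ℝ) + 2) * ‖b (n + 2)‖ * (ρ * ‖z₁ - z₂‖) := by
              refine mul_le_mul_of_nonneg_left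
                (mul_le_mul_of_nonneg_right h2 hd.le) (by positivity)
      calc ‖∑' n : ℕ, b (n + 2) * (z₁ ^ (n + 2) - z₂ ^ (n + 2))‖ ≤
          ∑' n : ℕ, ((n : ℝ) + 2) * ‖b (n + 2)‖ * (ρ * ‖z₁ - z₂‖) :=
            tsum_of_norm_bounded (hsQ'.mul_right _).hasSum hb
        _ = Q' * (ρ * ‖z₁ - z₂‖) := tsum_mul_right
    have hΔB : ‖∑' n : ℕ, b (n + 1) * (z₁ ^ (n + 1) - z₂ ^ (n + 1))‖ ≤
        ‖b 1‖ * ‖z₁ - z₂‖ + Q' * (ρ * ‖z₁ - z₂‖) := by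
      rw [hΔBsplit]
      refine le_trans (norm_add_le _ _) ?_
      rw [norm_mul]
      linarith
    -- contradiction
    have hlow : ‖z₁ - z₂‖ - (‖∑' n : ℕ, a (n + 2) * (z₁ ^ (n + 2) - z₂ ^ (n + 2))‖ +
        ‖∑' n : ℕ, b (n + 1) * (z₁ ^ (n + 1) - z₂ ^ (n + 1))‖) ≤ 0 := by
      have h1 := norm_add_lower (z₁ - z₂)
        ((∑' n : ℕ, a (n + 2) * (z₁ ^ (n + 2) - z₂ ^ (n + 2))) +
          (starRingEnd ℂ) (∑' n : ℕ, b (n + 1) * (z₁ ^ (n + 1) - z₂ ^ (n + 1))))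
      rw [← hdiff, norm_zero] at h1
      have h2 := norm_add_le (∑' n : ℕ, a (n + 2) * (z₁ ^ (n + 2) - z₂ ^ (n + 2)))
        ((starRingEnd ℂ) (∑' n : ℕ, b (n + 1) * (z₁ ^ (n + 1) - z₂ ^ (n + 1))))
      rw [RCLike.norm_conj] at h2
      linarith
    nlinarith [mul_nonneg (mul_nonneg hρ0 hd.le) (by linarith [key1, norm_nonneg (b 1)] :
        (0:ℝ) ≤ 1 - ‖b 1‖ - (P + Q')),
      mul_pos (mul_pos hd (by linarith : (0:ℝ) < 1 - ‖b 1‖)) (by linarith : (0:ℝ) < 1 - ρ)]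
  · -- sense-preserving
    intro z hz
    have hz1 : ‖z‖ ≤ 1 := hz.le
    have hcL : Summable (fun n : ℕ => ((n + 1 : ℕ) : ℂ) * b (n + 1) * z ^ n) :=
      summable_cz (fun n => ((n : ℝ) + 1) * ‖b (n + 1)‖) _ (fun n => n) hz1
        (fun n => le_of_eq (by rw [norm_mul, Complex.norm_natCast]; push_cast; ring)) hsQ
    have hsplit : (∑' n : ℕ, ((n + 1 : ℕ) : ℂ) * b (n + 1) * z ^ n) =
        ((0 + 1 : ℕ) : ℂ) * b (0 + 1) * z ^ 0 +
          ∑' n : ℕ, ((n + 1 + 1 : ℕ) : ℂ) * b (n + 1 + 1) * z ^ (n + 1) :=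
      Summable.tsum_eq_zero_add hcL
    have htail : ‖∑' n : ℕ, ((n + 1 + 1 : ℕ) : ℂ) * b (n + 1 + 1) * z ^ (n + 1)‖ ≤
        Q' * ‖z‖ := by
      have h := norm_tsum_le_mul_pow (fun n => ((n + 1 + 1 : ℕ) : ℂ) * b (n + 1 + 1))
        (fun n => ((n : ℝ) + 2) * ‖b (n + 2)‖) (fun n => n + 1) 1 hz1 le_rfl
        (fun n => Nat.le_add_left 1 n)
        (fun n => le_of_eq (by rw [norm_mul, Complex.norm_natCast]; push_cast; ring)) hsQ'
      simpa using h
    have hT : ‖∑' n : ℕ, ((n + 2 : ℕ) : ℂ) * a (n + 2) * z ^ (n + 1)‖ ≤ P * ‖z‖ := by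
      have h := norm_tsum_le_mul_pow (fun n => ((n + 2 : ℕ) : ℂ) * a (n + 2))
        (fun n => ((n : ℝ) + 2) * ‖a (n + 2)‖) (fun n => n + 1) 1 hz1 le_rfl
        (fun n => Nat.le_add_left 1 n)
        (fun n => le_of_eq (by rw [norm_mul, Complex.norm_natCast]; push_cast; ring)) hsP
      simpa using h
    have hRHS : 1 - P * ‖z‖ ≤ ‖1 + ∑' n : ℕ, ((n + 2 : ℕ) : ℂ) * a (n + 2) * z ^ (n + 1)‖ := by
      have h := norm_add_lower 1 (∑' n : ℕ, ((n + 2 : ℕ) : ℂ) * a (n + 2) * z ^ (n + 1))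
      rw [norm_one] at h
      linarith
    rw [hsplit]
    have hfirst : ‖((0 + 1 : ℕ) : ℂ) * b (0 + 1) * z ^ 0‖ = ‖b 1‖ := by norm_num
    refine le_trans (le_trans (norm_add_le _ _) ?_) hRHS
    rw [hfirst]
    nlinarith [norm_nonneg z, norm_nonneg (b 1),
      mul_nonneg (by linarith : (0:ℝ) ≤ 1 - ‖z‖) (by linarith [key1, norm_nonneg (b 1)] :
        (0:ℝ) ≤ P + Q')]
  · -- starlikeness
    intro z hz hz0
    have hz1 : ‖z‖ ≤ 1 := hz.le
    have hr0 : 0 < ‖z‖ := norm_pos_iff.mpr hz0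
    have sA : Summable (fun n : ℕ => a (n + 2) * z ^ (n + 2)) :=
      summable_cz (fun n => ‖a (n + 2)‖) _ (fun n => n + 2) hz1 (fun n => le_rfl) hsnA
    have sB : Summable (fun n : ℕ => b (n + 1) * z ^ (n + 1)) :=
      summable_cz (fun n => ‖b (n + 1)‖) _ (fun n => n + 1) hz1 (fun n => le_rfl) hsnB
    have sA' : Summable (fun n : ℕ => ((n + 2 : ℕ) : ℂ) * a (n + 2) * z ^ (n + 2)) :=
      summable_cz (fun n => ((n : ℝ) + 2) * ‖a (n + 2)‖) _ (fun n => n + 2) hz1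
        (fun n => le_of_eq (by rw [norm_mul, Complex.norm_natCast]; push_cast; ring)) hsP
    have sB' : Summable (fun n : ℕ => ((n + 1 : ℕ) : ℂ) * b (n + 1) * z ^ (n + 1)) :=
      summable_cz (fun n => ((n : ℝ) + 1) * ‖b (n + 1)‖) _ (fun n => n + 1) hz1
        (fun n => le_of_eq (by rw [norm_mul, Complex.norm_natCast]; push_cast; ring)) hsQ
    set A : ℂ := ∑' n : ℕ, a (n + 2) * z ^ (n + 2) with hA
    set B : ℂ := ∑' n : ℕ, b (n + 1) * z ^ (n + 1) with hB
    set A' : ℂ := ∑' n : ℕ, ((n + 2 : ℕ) : ℂ) * a (n + 2) * z ^ (n + 2) with hA'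
    set B' : ℂ := ∑' n : ℕ, ((n + 1 : ℕ) : ℂ) * b (n + 1) * z ^ (n + 1) with hB'
    have hfz : f z = z + A + (starRingEnd ℂ) B := hf z hz
    -- norm bounds
    have hnormA1 : ‖A‖ ≤ nA * ‖z‖ := by
      simpa using norm_tsum_le_mul_pow _ (fun n => ‖a (n + 2)‖) (fun n => n + 2) 1 hz1 le_rfl
        (fun n => Nat.le_add_left 1 (n + 1)) (fun n => le_rfl) hsnA
    have hnormA2 : ‖A‖ ≤ nA * ‖z‖ ^ 2 := by
      simpa using norm_tsum_le_mul_pow _ (fun n => ‖a (n + 2)‖) (fun n => n + 2) 2 hz1 le_rfl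
        (fun n => Nat.le_add_left 2 n) (fun n => le_rfl) hsnA
    have hnormA' : ‖A'‖ ≤ P * ‖z‖ := by
      simpa using norm_tsum_le_mul_pow _ (fun n => ((n : ℝ) + 2) * ‖a (n + 2)‖) (fun n => n + 2) 1 hz1
        le_rfl (fun n => Nat.le_add_left 1 (n + 1))
        (fun n => le_of_eq (by rw [norm_mul, Complex.norm_natCast]; push_cast; ring)) hsP
    have hnormB1 : ‖B‖ ≤ nB * ‖z‖ := by
      simpa using norm_tsum_le_mul_pow _ (fun n => ‖b (n + 1)‖) (fun n => n + 1) 1 hz1 le_rfl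
        (fun n => Nat.le_add_left 1 n) (fun n => le_rfl) hsnB
    have hnormB' : ‖B'‖ ≤ Q * ‖z‖ := by
      simpa using norm_tsum_le_mul_pow _ (fun n => ((n : ℝ) + 1) * ‖b (n + 1)‖) (fun n => n + 1) 1 hz1
        le_rfl (fun n => Nat.le_add_left 1 n)
        (fun n => le_of_eq (by rw [norm_mul, Complex.norm_natCast]; push_cast; ring)) hsQ
    -- f z ≠ 0
    have hBsplit : B = b (0 + 1) * z ^ (0 + 1) +
        ∑' n : ℕ, b (n + 1 + 1) * z ^ (n + 1 + 1) := by
      rw [hB]; exact Summable.tsum_eq_zero_add sB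
    have hBtail : ‖∑' n : ℕ, b (n + 1 + 1) * z ^ (n + 1 + 1)‖ ≤ nB2 * ‖z‖ ^ 2 := by
      simpa using norm_tsum_le_mul_pow _ (fun n => ‖b (n + 2)‖) (fun n => n + 2) 2 hz1 le_rfl
        (fun n => Nat.le_add_left 2 n) (fun n => le_rfl) hsnB2
    have hnormBfine : ‖B‖ ≤ ‖b 1‖ * ‖z‖ + nB2 * ‖z‖ ^ 2 := by
      rw [hBsplit]
      refine le_trans (norm_add_le _ _) ?_
      have h1 : ‖b (0 + 1) * z ^ (0 + 1)‖ = ‖b 1‖ * ‖z‖ := by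
        rw [norm_mul]; norm_num
      rw [h1]
      linarith
    have hfzlow : ‖z‖ * ((1 - ‖b 1‖) * (1 - ‖z‖)) ≤ ‖f z‖ := by
      have h1 : ‖z‖ - ‖A + (starRingEnd ℂ) B‖ ≤ ‖f z‖ := by
        rw [hfz, add_assoc]
        exact norm_add_lower z (A + (starRingEnd ℂ) B)
      have h2 : ‖A + (starRingEnd ℂ) B‖ ≤ ‖A‖ + ‖B‖ := by
        refine le_trans (norm_add_le _ _) ?_
        rw [RCLike.norm_conj]
      nlinarith [mul_nonneg (mul_nonneg hr0.le hr0.le)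
        (by linarith [key2] : (0:ℝ) ≤ 1 - ‖b 1‖ - (nA + nB2)), sq_nonneg ‖z‖]
    have hfz0 : f z ≠ 0 := by
      intro h0
      rw [h0, norm_zero] at hfzlow
      nlinarith [mul_pos hr0 (mul_pos (by linarith : (0:ℝ) < 1 - ‖b 1‖)
        (by linarith : (0:ℝ) < 1 - ‖z‖))]
    -- combined sums
    have hcombA : (∑' n : ℕ, (((n + 2 : ℕ) : ℂ) - ((1 : ℂ) + (alpha : ℂ))) * a (n + 2) *
        z ^ (n + 2)) = A' - ((1 : ℂ) + (alpha : ℂ)) * A := by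
      rw [hA', hA]
      exact tsum_combine _ _ _ _ _ sA' sA
    have hcombB : (∑' n : ℕ, (((n + 1 : ℕ) : ℂ) - ((1 : ℂ) - (alpha : ℂ))) * b (n + 1) *
        z ^ (n + 1)) = B' - ((1 : ℂ) - (alpha : ℂ)) * B := by
      rw [hB', hB]
      exact tsum_combine _ _ _ _ _ sB' sB
    have hD1 : ‖A' - ((1 : ℂ) + (alpha : ℂ)) * A‖ ≤ Ta1 * ‖z‖ := by
      rw [← hcombA]
      have hle := norm_tsum_le_mul_pow
        (fun n => (((n + 2 : ℕ) : ℂ) - ((1 : ℂ) + (alpha : ℂ))) * a (n + 2))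
        (fun n => ((n : ℝ) + 1 - alpha) * ‖a (n + 2)‖)
        (fun n => n + 2) 1 hz1 le_rfl (fun n => Nat.le_add_left 1 (n + 1)) (fun n => ?_) hsTa1
      · simpa using hle
      rw [norm_mul]
      have he : ((n + 2 : ℕ) : ℂ) - ((1 : ℂ) + (alpha : ℂ)) =
          ((((n : ℝ) + 1 - alpha) : ℝ) : ℂ) := by push_cast; ring
      rw [he, Complex.norm_real, Real.norm_eq_abs,
        _root_.abs_of_nonneg (by nlinarith [Nat.cast_nonneg (α := ℝ) n])]
    have hD2 : ‖B' - ((1 : ℂ) - (alpha : ℂ)) * B‖ ≤ Tb2 * ‖z‖ := by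
      rw [← hcombB]
      have hle := norm_tsum_le_mul_pow
        (fun n => (((n + 1 : ℕ) : ℂ) - ((1 : ℂ) - (alpha : ℂ))) * b (n + 1))
        (fun n => ((n : ℝ) + alpha) * ‖b (n + 1)‖)
        (fun n => n + 1) 1 hz1 le_rfl (fun n => Nat.le_add_left 1 n) (fun n => ?_) hsTb2
      · simpa using hle
      rw [norm_mul]
      have he : ((n + 1 : ℕ) : ℂ) - ((1 : ℂ) - (alpha : ℂ)) =
          ((((n : ℝ) + alpha) : ℝ) : ℂ) := by push_cast; ring
      rw [he, Complex.norm_real, Real.norm_eq_abs, _root_.abs_of_nonneg (by positivity)]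
    -- conjugation identities
    have ht1 : (starRingEnd ℂ) (B' + ((1 : ℂ) + (alpha : ℂ)) * B) =
        (starRingEnd ℂ) B' + ((1 : ℂ) + (alpha : ℂ)) * (starRingEnd ℂ) B := by
      rw [map_add, map_mul, map_add, Complex.conj_ofReal, map_one]
    have ht2 : (starRingEnd ℂ) (B' - ((1 : ℂ) - (alpha : ℂ)) * B) =
        (starRingEnd ℂ) B' - ((1 : ℂ) - (alpha : ℂ)) * (starRingEnd ℂ) B := by
      rw [map_sub, map_mul, map_sub, Complex.conj_ofReal, map_one]
    set u : ℂ := z + A' - (starRingEnd ℂ) B' with hu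
    have eqU : u - (alpha : ℂ) * f z - f z =
        -(alpha : ℂ) * z + (A' - ((1 : ℂ) + (alpha : ℂ)) * A) -
          (starRingEnd ℂ) (B' + ((1 : ℂ) + (alpha : ℂ)) * B) := by
      rw [ht1, hu, hfz]; ring
    have eqL : u - (alpha : ℂ) * f z + f z =
        ((2 - alpha : ℝ) : ℂ) * z + (A' + ((1 : ℂ) - (alpha : ℂ)) * A) -
          (starRingEnd ℂ) (B' - ((1 : ℂ) - (alpha : ℂ)) * B) := by
      rw [ht2, hu, hfz]; push_cast; ring
    have hnorm1a : ‖(1 : ℂ) + (alpha : ℂ)‖ = 1 + alpha := by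
      rw [show (1 : ℂ) + (alpha : ℂ) = (((1 + alpha : ℝ)) : ℂ) by push_cast; ring,
        Complex.norm_real, Real.norm_eq_abs, _root_.abs_of_nonneg (by linarith)]
    have hnorm1b : ‖(1 : ℂ) - (alpha : ℂ)‖ = 1 - alpha := by
      rw [show (1 : ℂ) - (alpha : ℂ) = (((1 - alpha : ℝ)) : ℂ) by push_cast; ring,
        Complex.norm_real, Real.norm_eq_abs, _root_.abs_of_nonneg (by linarith)]
    refine alpha_le_re_div alpha hfz0 ?_
    rw [eqU, eqL]
    have hUb : ‖-(alpha : ℂ) * z + (A' - ((1 : ℂ) + (alpha : ℂ)) * A) -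
        (starRingEnd ℂ) (B' + ((1 : ℂ) + (alpha : ℂ)) * B)‖ ≤
        alpha * ‖z‖ + Ta1 * ‖z‖ + (Q * ‖z‖ + (1 + alpha) * (nB * ‖z‖)) := by
      refine le_trans (norm_sub_le _ _) ?_
      have hx : ‖-(alpha : ℂ) * z‖ = alpha * ‖z‖ := by
        rw [norm_mul, norm_neg, Complex.norm_real, Real.norm_eq_abs, _root_.abs_of_nonneg halpha0]
      have hy : ‖(starRingEnd ℂ) (B' + ((1 : ℂ) + (alpha : ℂ)) * B)‖ ≤
          Q * ‖z‖ + (1 + alpha) * (nB * ‖z‖) := by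
        rw [RCLike.norm_conj]
        refine le_trans (norm_add_le _ _) (add_le_add hnormB' ?_)
        rw [norm_mul, hnorm1a]
        exact mul_le_mul_of_nonneg_left hnormB1 (by linarith)
      have hxx := norm_add_le (-(alpha : ℂ) * z) (A' - ((1 : ℂ) + (alpha : ℂ)) * A)
      rw [hx] at hxx
      linarith
    have hLb : (2 - alpha) * ‖z‖ - (P * ‖z‖ + (1 - alpha) * (nA * ‖z‖)) - Tb2 * ‖z‖ ≤
        ‖((2 - alpha : ℝ) : ℂ) * z + (A' + ((1 : ℂ) - (alpha : ℂ)) * A) -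
          (starRingEnd ℂ) (B' - ((1 : ℂ) - (alpha : ℂ)) * B)‖ := by
      rw [add_sub_assoc]
      have h1 := norm_add_lower (((2 - alpha : ℝ)) * z : ℂ)
        ((A' + ((1 : ℂ) - (alpha : ℂ)) * A) -
          (starRingEnd ℂ) (B' - ((1 : ℂ) - (alpha : ℂ)) * B))
      have h2 : ‖(A' + ((1 : ℂ) - (alpha : ℂ)) * A) -
          (starRingEnd ℂ) (B' - ((1 : ℂ) - (alpha : ℂ)) * B)‖ ≤
          (P * ‖z‖ + (1 - alpha) * (nA * ‖z‖)) + Tb2 * ‖z‖ := by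
        refine le_trans (norm_sub_le _ _) (add_le_add ?_ ?_)
        · refine le_trans (norm_add_le _ _) (add_le_add hnormA' ?_)
          rw [norm_mul, hnorm1b]
          exact mul_le_mul_of_nonneg_left hnormA1 (by linarith)
        · rw [RCLike.norm_conj]
          exact hD2
      have h3 : ‖(((2 - alpha : ℝ)) * z : ℂ)‖ = (2 - alpha) * ‖z‖ := by
        rw [norm_mul, Complex.norm_real, Real.norm_eq_abs, _root_.abs_of_nonneg (by linarith)]
      rw [h3] at h1
      linarith
    refine le_trans hUb (le_trans ?_ hLb)
    nlinarith [mul_le_mul_of_nonneg_right keyStar (norm_nonneg z)]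
end
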